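/- arXiv:1310.2725 — 5 statements merged into one kernel-verified Lean document; each statement's English description precedes it below -/
import Mathlib

section
/- Let m and n be integers with 1 ≤ n ≤ m and let q ∈ (0,1). Then the sum of W_{m,q}(B) over all n-element subsets B of {0,1,...,m−1} equals Z(m,n,q) = q^{C(m+1,2)−n} · S_{1/q}[m+1, m−n+1]. (Consequently π_{m,n,q}(B) = W_{m,q}(B)/Z(m,n,q) defines a probability distribution on the n-element subsets of {0,...,m−1}; this is the normalization part of the main theorem on the stationary distribution of the bounded geometric juggler's exclusion process.) -/
noncomputable section

/-- The `q`-analogue `[k]_q = (1 - q^k)/(1 - q)` of a natural number `k`. -/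
def qAnalogue (q : ℝ) (k : ℕ) : ℝ := (1 - q ^ k) / (1 - q)

/-- The `q`-Stirling numbers of the second kind `S_q[a,b]`, defined by
`S_q[0,0] = 1`, `S_q[a,b] = 0` for `b > a` or (`b = 0` and `a ≥ 1`), and
`S_q[a+1,b] = q^(b-1) S_q[a,b-1] + [b]_q S_q[a,b]`. -/
def qStirling (q : ℝ) : ℕ → ℕ → ℝ
  | 0, 0 => 1
  | 0, _ + 1 => 0
  | _ + 1, 0 => 0
  | a + 1, b + 1 => q ^ b * qStirling q a b + qAnalogue q (b + 1) * qStirling q a (b + 1)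

/-- The normalization constant `Z(m,n,q) = q^(C(m+1,2) - n) * S_{1/q}[m+1, m-n+1]`. -/
def Zval (m n : ℕ) (q : ℝ) : ℝ :=
  q ^ (((m + 1).choose 2 : ℤ) - (n : ℤ)) * qStirling (1 / q) (m + 1) (m - n + 1)

/-- `v_B(x) = |{x, x+1, ..., m-1} \ B|`, the number of vacant slots weakly above `x`. -/
def vB (m : ℕ) (B : Finset ℕ) (x : ℕ) : ℕ := ((Finset.Ico x m) \ B).card

/-- The stationary weight `W_{m,q}(B) = ∏_{x ∈ B} [1 + v_B(x)]_q * q^x`. -/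
def W (m : ℕ) (q : ℝ) (B : Finset ℕ) : ℝ :=
  ∏ x ∈ B, qAnalogue q (1 + vB m B x) * q ^ x


open Finset


def succEmb : ℕ ↪ ℕ := ⟨Nat.succ, Nat.succ_injective⟩

lemma range_succ_eq (m : ℕ) :
    Finset.range (m + 1) = insert 0 ((Finset.range m).map succEmb) := by
  ext y
  cases y with
  | zero => simp
  | succ z => simp [succEmb, Nat.succ_lt_succ_iff]

lemma vB_map (m x : ℕ) (B : Finset ℕ) :
    vB (m + 1) (B.map succEmb) (x + 1) = vB m B x := by
  unfold vB
  have h : (Finset.Ico (x+1) (m+1)) \ (B.map succEmb) = ((Finset.Ico x m) \ B).map succEmb := by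
    ext y
    cases y with
    | zero => simp [succEmb]
    | succ z => simp [succEmb, Nat.succ_lt_succ_iff, Nat.succ_le_succ_iff]
  rw [h, card_map]

lemma vB_insert_zero (M x : ℕ) (B : Finset ℕ) :
    vB M (insert 0 B) (x + 1) = vB M B (x + 1) := by
  unfold vB
  congr 1
  ext y
  simp only [mem_sdiff, mem_Ico, mem_insert]
  constructor
  · rintro ⟨h1, h3⟩
    exact ⟨h1, fun hB => h3 (Or.inr hB)⟩
  · rintro ⟨h1, h3⟩
    refine ⟨h1, ?_⟩
    rintro (rfl | hB)
    · omega
    · exact h3 hB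

lemma vB_insert_zero_zero (M : ℕ) (B : Finset ℕ) (hB : insert 0 B ⊆ Finset.range M) :
    vB M (insert 0 B) 0 = M - (insert 0 B).card := by
  unfold vB
  rw [Nat.Ico_zero_eq_range, card_sdiff_of_subset hB, card_range]

lemma W_map (m : ℕ) (q : ℝ) (B : Finset ℕ) :
    W (m + 1) q (B.map succEmb) = q ^ B.card * W m q B := by
  unfold W
  rw [prod_map]
  have : ∀ x ∈ B, qAnalogue q (1 + vB (m+1) (B.map succEmb) (succEmb x)) * q ^ (succEmb x)
      = q * (qAnalogue q (1 + vB m B x) * q ^ x) := by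
    intro x hx
    have : succEmb x = x + 1 := rfl
    rw [this, vB_map]
    ring
  rw [prod_congr rfl this, prod_mul_distrib, prod_const]

lemma W_insert_zero (M : ℕ) (q : ℝ) (B : Finset ℕ) (h0 : ∀ y ∈ B, y ≠ 0) :
    W M q (insert 0 B) = qAnalogue q (1 + vB M (insert 0 B) 0) * W M q B := by
  unfold W
  rw [prod_insert (fun h => h0 0 h rfl)]
  simp only [pow_zero, mul_one]
  congr 1
  refine prod_congr rfl fun x hx => ?_
  obtain ⟨z, rfl⟩ := Nat.exists_eq_succ_of_ne_zero (h0 x hx)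
  rw [vB_insert_zero]

lemma F_rec (m n : ℕ) (q : ℝ) :
    ∑ B ∈ powersetCard (n+1) (range (m+1)), W (m+1) q B
      = qAnalogue q (1 + (m - n)) * q ^ n * (∑ B ∈ powersetCard n (range m), W m q B)
        + q ^ (n+1) * ∑ B ∈ powersetCard (n+1) (range m), W m q B := by
  have h0 : (0 : ℕ) ∉ (range m).map succEmb := by simp [succEmb]
  rw [range_succ_eq, powersetCard_succ_insert h0]
  have hdisj : Disjoint (powersetCard (n+1) ((range m).map succEmb))
      (((range m).map succEmb).powersetCard n |>.image (insert 0)) := by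
    rw [disjoint_left]
    intro B hB hB'
    have h1 : 0 ∉ B := fun h => h0 ((mem_powersetCard.mp hB).1 h)
    obtain ⟨C, _, rfl⟩ := mem_image.mp hB'
    exact h1 (mem_insert_self 0 C)
  rw [sum_union hdisj]
  have key1 : ∑ B ∈ powersetCard (n+1) ((range m).map succEmb), W (m+1) q B
      = q ^ (n+1) * ∑ B ∈ powersetCard (n+1) (range m), W m q B := by
    rw [powersetCard_map, sum_map, mul_sum]
    refine sum_congr rfl fun B hB => ?_
    rw [RelEmbedding.coe_toEmbedding, mapEmbedding_apply, W_map,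
      (mem_powersetCard.mp hB).2]
  have key2 : ∑ B ∈ (((range m).map succEmb).powersetCard n |>.image (insert 0)), W (m+1) q B
      = qAnalogue q (1 + (m - n)) * q ^ n * ∑ B ∈ powersetCard n (range m), W m q B := by
    rw [sum_image, powersetCard_map, sum_map, mul_sum]
    · refine sum_congr rfl fun B hB => ?_
      obtain ⟨hBsub, hBcard⟩ := mem_powersetCard.mp hB
      rw [RelEmbedding.coe_toEmbedding, mapEmbedding_apply]
      have hne : ∀ y ∈ B.map succEmb, y ≠ 0 := by simp [succEmb]
      rw [W_insert_zero _ _ _ hne, W_map, hBcard]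
      have hsub : insert 0 (B.map succEmb) ⊆ range (m+1) := by
        rw [range_succ_eq]
        exact insert_subset_insert _ (map_subset_map.mpr hBsub)
      rw [vB_insert_zero_zero _ _ hsub]
      have hc : (insert 0 (B.map succEmb)).card = n + 1 := by
        rw [card_insert_of_notMem, card_map, hBcard]
        simp [succEmb]
      rw [hc]
      have : m + 1 - (n + 1) = m - n := by omega
      rw [this]
      ring
    · intro B hB C hC hBC
      have hB0 : 0 ∉ B := fun h => h0 ((mem_powersetCard.mp hB).1 h)
      have hC0 : 0 ∉ C := fun h => h0 ((mem_powersetCard.mp hC).1 h)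
      rw [← erase_insert hB0, ← erase_insert hC0, hBC]
  rw [key1, key2]
  ring


lemma choose_two_succ (m : ℕ) : (m+1).choose 2 = m.choose 2 + m := by
  have h : (m+1).choose 2 = m.choose 1 + m.choose 2 := Nat.choose_succ_succ m 1
  rw [h, Nat.choose_one_right, Nat.add_comm]

lemma qA_one {q : ℝ} (hq1 : q ≠ 1) : qAnalogue q 1 = 1 := by
  unfold qAnalogue
  rw [pow_one, div_self (sub_ne_zero.mpr (Ne.symm hq1))]

lemma qA_inv {q : ℝ} (hq0 : q ≠ 0) (hq1 : q ≠ 1) (k : ℕ) :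
    qAnalogue (1/q) (k+1) = (q ^ (k+1))⁻¹ * q * qAnalogue q (k+1) := by
  unfold qAnalogue
  have h1 : (1:ℝ) - q ≠ 0 := sub_ne_zero.mpr (Ne.symm hq1)
  have h2 : q ^ (k+1) ≠ 0 := pow_ne_zero _ hq0
  have h3 : (1:ℝ) - 1/q ≠ 0 := by
    rw [one_div, sub_ne_zero]
    intro h
    exact hq1 (by rw [← inv_inv q, ← h, inv_one])
  rw [div_eq_iff h3, one_div, inv_pow]
  field_simp
  ring

lemma qStirling_eq_zero (p : ℝ) : ∀ a b, a < b → qStirling p a b = 0 := by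
  intro a
  induction a with
  | zero => intro b hb; obtain ⟨c, rfl⟩ := Nat.exists_eq_succ_of_ne_zero (by omega : b ≠ 0); rfl
  | succ a ih =>
    intro b hb
    obtain ⟨c, rfl⟩ := Nat.exists_eq_succ_of_ne_zero (by omega : b ≠ 0)
    show p ^ c * qStirling p a c + qAnalogue p (c + 1) * qStirling p a (c + 1) = 0
    rw [ih c (by omega), ih (c+1) (by omega)]
    ring

lemma qStirling_diag (p : ℝ) : ∀ a, qStirling p a a = p ^ (a.choose 2) := by
  intro a
  induction a with
  | zero => rfl
  | succ a ih =>
    show p ^ a * qStirling p a a + qAnalogue p (a + 1) * qStirling p a (a + 1) = _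
    rw [ih, qStirling_eq_zero p a (a+1) (by omega)]
    rw [choose_two_succ, pow_add]
    ring

lemma Z_zero {q : ℝ} (hq0 : q ≠ 0) (m : ℕ) : Zval m 0 q = 1 := by
  unfold Zval
  rw [Nat.sub_zero, qStirling_diag, Nat.cast_zero, sub_zero, one_div, inv_pow,
    ← zpow_natCast q ((m+1).choose 2), ← zpow_neg, ← zpow_add₀ hq0]
  simp

lemma Z_diag {q : ℝ} (hq0 : q ≠ 0) (hq1 : q ≠ 1) (m : ℕ) :
    Zval (m+1) (m+1) q = q ^ m * Zval m m q := by
  have hp1 : (1:ℝ)/q ≠ 1 := by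
    rw [one_div]; intro h; exact hq1 (by rw [← inv_inv q, h, inv_one])
  unfold Zval
  rw [Nat.sub_self, Nat.sub_self]
  have h1 : qStirling (1/q) (m+1+1) (0+1) = qStirling (1/q) (m+1) (0+1) := by
    show (1/q) ^ 0 * qStirling (1/q) (m+1) 0 + qAnalogue (1/q) 1 * qStirling (1/q) (m+1) 1 = _
    have : qStirling (1/q) (m+1) 0 = 0 := rfl
    rw [this, qA_one hp1]
    ring
  rw [h1, ← zpow_natCast q m, ← mul_assoc, ← zpow_add₀ hq0]
  congr 2
  push_cast [choose_two_succ (m+1)]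
  ring

lemma Z_rec {q : ℝ} (hq0 : q ≠ 0) (hq1 : q ≠ 1) {m n : ℕ} (h : n < m) :
    Zval (m+1) (n+1) q
      = qAnalogue q (1 + (m - n)) * q ^ n * Zval m n q + q ^ (n+1) * Zval m (n+1) q := by
  obtain ⟨d, hd⟩ : ∃ d, m - n = d + 1 := ⟨m - n - 1, by omega⟩
  have hi1 : m + 1 - (n + 1) + 1 = d + 2 := by omega
  have hi2 : m - n + 1 = d + 2 := by omega
  have hi3 : m - (n + 1) + 1 = d + 1 := by omega
  unfold Zval
  rw [hi1, hi2, hi3, hd]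
  have hrec : qStirling (1/q) (m+1+1) (d+2)
      = (1/q) ^ (d+1) * qStirling (1/q) (m+1) (d+1)
        + qAnalogue (1/q) (d+2) * qStirling (1/q) (m+1) (d+2) := rfl
  rw [hrec, qA_inv hq0 hq1 (d+1)]
  set A := qStirling (1/q) (m+1) (d+1)
  set B := qStirling (1/q) (m+1) (d+2)
  have e0 : (1/q : ℝ) ^ (d+1) = q ^ (-(d+1:ℤ)) := by
    rw [one_div, inv_pow, ← zpow_natCast q (d+1), ← zpow_neg]
    norm_cast
  have e1 : (q ^ (d+1+1))⁻¹ * q = q ^ (-(d+1:ℤ)) := by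
    rw [← zpow_natCast q (d+1+1), ← zpow_neg, ← zpow_add_one₀ hq0]
    congr 1
  rw [e0, e1]
  have hC : ((m+2).choose 2 : ℤ) = ((m+1).choose 2 : ℤ) + (m+1) := by
    push_cast [choose_two_succ (m+1)]; ring
  have key : ∀ a b : ℤ, a + b = ((m+1).choose 2 : ℤ) →
      q ^ a * q ^ b = q ^ (((m+1).choose 2 : ℤ)) := by
    intro a b hab
    rw [← zpow_add₀ hq0, hab]
  have k1 : q ^ (((m+2).choose 2 : ℤ) - (n+1:ℕ)) * q ^ (-(d+1:ℤ))
      = q ^ (((m+1).choose 2 : ℤ)) := key _ _ (by push_cast [hC]; try omega)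
  have k2 : (q:ℝ) ^ (n:ℕ) * q ^ (((m+1).choose 2 : ℤ) - (n:ℕ))
      = q ^ (((m+1).choose 2 : ℤ)) := by
    rw [← zpow_natCast q n]; exact key _ _ (by push_cast; ring)
  have k3 : (q:ℝ) ^ (n+1:ℕ) * q ^ (((m+1).choose 2 : ℤ) - (n+1:ℕ))
      = q ^ (((m+1).choose 2 : ℤ)) := by
    rw [← zpow_natCast q (n+1)]; exact key _ _ (by push_cast; ring)
  have hqa : qAnalogue q (1 + (d+1)) = qAnalogue q (d+2) := by
    congr 1
    omega
  rw [hqa]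
  calc q ^ (((m+2).choose 2:ℤ) - (n+1:ℕ)) * (q ^ (-(d+1:ℤ)) * A + q ^ (-(d+1:ℤ)) * qAnalogue q (d+2) * B)
      = (q ^ (((m+2).choose 2:ℤ) - (n+1:ℕ)) * q ^ (-(d+1:ℤ))) * A
        + (q ^ (((m+2).choose 2:ℤ) - (n+1:ℕ)) * q ^ (-(d+1:ℤ))) * (qAnalogue q (d+2) * B) := by
        ring
    _ = q ^ (((m+1).choose 2:ℤ)) * A + q ^ (((m+1).choose 2:ℤ)) * (qAnalogue q (d+2) * B) := by
        rw [k1]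
    _ = qAnalogue q (d+2) * q ^ (n:ℕ) * (q ^ (((m+1).choose 2:ℤ) - (n:ℕ)) * B)
        + q ^ (n+1:ℕ) * (q ^ (((m+1).choose 2:ℤ) - (n+1:ℕ)) * A) := by
        rw [← mul_assoc (q ^ (n+1:ℕ)), k3]
        rw [mul_assoc (qAnalogue q (d+2)), ← mul_assoc (q ^ (n:ℕ)), k2]
        ring


lemma general {q : ℝ} (hq0 : q ≠ 0) (hq1 : q ≠ 1) :
    ∀ m n, n ≤ m → ∑ B ∈ powersetCard n (range m), W m q B = Zval m n q := by
  intro m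
  induction m with
  | zero =>
    intro n hn
    interval_cases n
    simp [Finset.powersetCard_zero, W, Z_zero hq0]
  | succ m ih =>
    intro n hn
    match n with
    | 0 => simp [Finset.powersetCard_zero, W, Z_zero hq0]
    | Nat.succ n =>
      rcases lt_or_eq_of_le (Nat.succ_le_succ_iff.mp hn) with h | h
      · rw [F_rec, ih n (le_of_lt h), ih (n+1) h, Z_rec hq0 hq1 h]
      · subst h
        rw [F_rec, ih n le_rfl, Z_diag hq0 hq1]
        have h1 : powersetCard (n+1) (range n) = ∅ :=
          powersetCard_eq_empty.mpr (by simp)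
        rw [h1, sum_empty, Nat.sub_self]
        have h2 : qAnalogue q (1 + 0) = 1 := qA_one hq1
        rw [h2]
        ring

/-- The sum of the stationary weights `W_{m,q}(B)` over all `n`-element subsets `B` of
`{0, ..., m-1}` equals the normalization constant `Z(m,n,q)`. -/
theorem sum_W_eq_Z (m n : ℕ) (hn : 1 ≤ n) (hm : n ≤ m) (q : ℝ) (hq : q ∈ Set.Ioo (0 : ℝ) 1) :
    ∑ B ∈ Finset.powersetCard n (Finset.range m), W m q B = Zval m n q := by
  exact general (ne_of_gt hq.1) (ne_of_lt hq.2) m n hm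
end
end

section
/- Let m and n be integers with 1 ≤ n ≤ m, let q ∈ (0,1), and set ℓ = m−n+1. Extend W_{m,q} by setting W_{m,q}(A) = 0 for every finite subset A ⊆ ℕ that is not contained in {0,1,...,m−1}. Then for every n-element subset B = {i_1 < i_2 < ... < i_n} of {0,1,...,m−1}: W_{m,q}(B) = W_{m,q}(B+1) + Σ_{k=1}^{n} W_{m,q}({0} ∪ ((B ∖ {i_k}) + 1)) · ((1−q)/(1−q^ℓ)) · q^{i_k − (k−1)}, where A+1 denotes {a+1 : a ∈ A}. (This is the stationarity/balance equation of the bounded geometric juggler's exclusion process, in which the particle thrown from height 0 lands at the (ξ+1)-th vacant height counted from below, with ξ distributed as an ℓ-truncated geometric distribution with parameter q; the theorem states that the weights W_{m,q} solve it.) -/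
noncomputable section

/-- The extension of `W_{m,q}` by zero to finite subsets of `ℕ` not contained
in `{0, ..., m-1}`. -/
def Wext (m : ℕ) (q : ℝ) (A : Finset ℕ) : ℝ :=
  if A ⊆ Finset.range m then W m q A else 0

/-!
With `V(y)` the number of vacant sites below `y` and `ℓ = m - n + 1`, one has
`1 + v_B(y) = ℓ - V(y)`, so `W(B) = ∏_{y ∈ B} [ℓ - V(y)]_q q^y`; this product formula also
covers the extension by zero, since a set leaving `{0, …, m-1}` has a factor `[0]_q = 0`.
Shifting `B` up raises every `V(y)` by one, and `[c + 1]_q q^y = [c]_q q^(y+1) + q^y` makes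
`W(B) - W(B+1)` telescope (`Finset.prod_add_ordered`) into a sum over `x ∈ B` of
`q^x ∏_{y < x} (factor of B) ∏_{y > x} (factor of B+1)`. This is the `x`-th term of the
balance equation: in `{0} ∪ ((B ∖ {x}) + 1)` the particle at `0` contributes `[ℓ]_q`,
cancelled by `(1-q)/(1-q^ℓ)`; the particles below `x` keep their vacancy count and gain a
factor `q` each, and those above `x` look exactly like particles of `B+1`.
-/
open Finset

lemma qAnalogue_zero (q : ℝ) : qAnalogue q 0 = 0 := by
  simp [qAnalogue]

lemma qAnalogue_succ {q : ℝ} (hq : q ≠ 1) (k : ℕ) :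
    qAnalogue q (k + 1) = q * qAnalogue q k + 1 := by
  have : 1 - q ≠ 0 := sub_ne_zero.mpr hq.symm
  unfold qAnalogue
  field_simp
  ring

lemma qAnalogue_mul_div_cancel {q : ℝ} {k : ℕ} (hq : q ^ k ≠ 1) :
    qAnalogue q k * ((1 - q) / (1 - q ^ k)) = 1 := by
  have h1 : 1 - q ≠ 0 := sub_ne_zero.mpr fun h => hq (by rw [← h, one_pow])
  have h2 : 1 - q ^ k ≠ 0 := sub_ne_zero.mpr hq.symm
  unfold qAnalogue
  field_simp

lemma qAnalogue_sub_mul_pow {q : ℝ} (hq : q ≠ 1) {k d : ℕ} (hd : d < k) (y : ℕ) :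
    qAnalogue q (k - d) * q ^ y = qAnalogue q (k - (d + 1)) * q ^ (y + 1) + q ^ y := by
  rw [show k - d = k - (d + 1) + 1 by omega, qAnalogue_succ hq]
  ring

/-- The number of vacant sites below `y`, written `x - s(x)` in the balance equation. -/
def vacBelow (A : Finset ℕ) (y : ℕ) : ℕ := #(range y \ A)

lemma vacBelow_add_card_filter_lt (A : Finset ℕ) (y : ℕ) :
    vacBelow A y + #(A.filter (· < y)) = y := by
  have : A.filter (· < y) = range y ∩ A := by ext; simp [and_comm]
  rw [vacBelow, this, card_sdiff_add_card_inter, card_range]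

lemma vB_add_vacBelow {m : ℕ} {A : Finset ℕ} (hA : A ⊆ range m) {y : ℕ} (hy : y ≤ m) :
    vB m A y + vacBelow A y + #A = m := by
  have hsplit : range m \ A = (Ico y m \ A) ∪ (range y \ A) := by
    ext z; simp only [mem_sdiff, mem_union, mem_Ico, mem_range]; grind
  have hdisj : Disjoint (Ico y m \ A) (range y \ A) := by
    rw [disjoint_left]; intro z; simp only [mem_sdiff, mem_Ico, mem_range]; omega
  rw [vB, vacBelow, ← card_union_of_disjoint hdisj, ← hsplit, card_sdiff_add_card_eq_card hA,
    card_range]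

lemma sub_card_le_vacBelow {A : Finset ℕ} {a : ℕ} (ha : a ∈ A) :
    a + 1 - #A ≤ vacBelow A a := by
  have : range a \ A = range (a + 1) \ A := by
    rw [range_add_one, insert_sdiff_of_mem _ ha]
  simpa [vacBelow, this] using le_card_sdiff A (range (a + 1))

lemma vacBelow_image_succ (A : Finset ℕ) (y : ℕ) :
    vacBelow (A.image (· + 1)) (y + 1) = vacBelow A y + 1 := by
  have : range (y + 1) \ A.image (· + 1) = insert 0 ((range y \ A).image (· + 1)) := by
    ext z; cases z <;> simp
  rw [vacBelow, this, card_insert_of_notMem (by simp),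
    card_image_of_injective _ (add_left_injective 1), vacBelow]

lemma vacBelow_insert_zero_image_succ (A : Finset ℕ) (y : ℕ) :
    vacBelow (insert 0 (A.image (· + 1))) (y + 1) = vacBelow A y := by
  have : range (y + 1) \ insert 0 (A.image (· + 1)) = (range y \ A).image (· + 1) := by
    ext z; cases z <;> simp
  rw [vacBelow, this, card_image_of_injective _ (add_left_injective 1), vacBelow]

lemma vacBelow_erase_of_le {A : Finset ℕ} {x y : ℕ} (hxy : y ≤ x) :
    vacBelow (A.erase x) y = vacBelow A y := by
  have : range y \ A.erase x = range y \ A := by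
    ext z; simp only [mem_sdiff, mem_range, mem_erase]; grind
  rw [vacBelow, vacBelow, this]

lemma vacBelow_erase_of_lt {A : Finset ℕ} {x y : ℕ} (hx : x ∈ A) (hxy : x < y) :
    vacBelow (A.erase x) y = vacBelow A y + 1 := by
  rw [vacBelow, vacBelow, sdiff_erase (mem_range.mpr hxy), card_insert_of_notMem (by simp [hx])]

theorem Wext_eq_prod (m : ℕ) (q : ℝ) (A : Finset ℕ) :
    Wext m q A = ∏ y ∈ A, qAnalogue q (m + 1 - #A - vacBelow A y) * q ^ y := by
  by_cases hA : A ⊆ range m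
  · rw [Wext, if_pos hA, W]
    refine prod_congr rfl fun y hy => ?_
    have := vB_add_vacBelow hA (mem_range.mp (hA hy)).le
    congr 2
    omega
  · obtain ⟨a, ha, ham⟩ := not_subset.mp hA
    have : m + 1 - #A - vacBelow A a = 0 := by
      have := sub_card_le_vacBelow ha
      simp only [mem_range, not_lt] at ham
      omega
    rw [Wext, if_neg hA, prod_eq_zero ha (by rw [this, qAnalogue_zero, zero_mul])]

theorem Wext_image_succ (m : ℕ) (q : ℝ) (B : Finset ℕ) :
    Wext m q (B.image (· + 1)) =
      ∏ y ∈ B, qAnalogue q (m + 1 - #B - (vacBelow B y + 1)) * q ^ (y + 1) := by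
  rw [Wext_eq_prod, card_image_of_injective _ (add_left_injective 1),
    prod_image fun a _ b _ h => add_left_injective 1 h]
  simp only [vacBelow_image_succ]

theorem Wext_insert_zero_image_succ_erase_mul (m : ℕ) (q : ℝ) {B : Finset ℕ} {x : ℕ}
    (hx : x ∈ B) :
    Wext m q (insert 0 ((B.erase x).image (· + 1))) * q ^ vacBelow B x =
      qAnalogue q (m + 1 - #B) * q ^ x *
        (∏ y ∈ B with y < x, qAnalogue q (m + 1 - #B - vacBelow B y) * q ^ y) *
        ∏ y ∈ B with x < y, qAnalogue q (m + 1 - #B - (vacBelow B y + 1)) * q ^ (y + 1) := by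
  have h0 : 0 ∉ (B.erase x).image (· + 1) := by simp
  have hcard : #(insert 0 ((B.erase x).image (· + 1))) = #B := by
    rw [card_insert_of_notMem h0, card_image_of_injective _ (add_left_injective 1),
      card_erase_add_one hx]
  have hfilter_lt : (B.erase x).filter (· < x) = B.filter (· < x) := by
    ext y; simp only [mem_filter, mem_erase]; grind
  have hfilter_gt : (B.erase x).filter (fun y => ¬ y < x) = B.filter (x < ·) := by
    ext y; simp only [mem_filter, mem_erase]; grind
  rw [Wext_eq_prod, hcard, prod_insert h0, prod_image fun a _ b _ h => add_left_injective 1 h,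
    ← prod_filter_mul_prod_filter_not _ (· < x), hfilter_lt, hfilter_gt]
  have hV0 : vacBelow (insert 0 ((B.erase x).image (· + 1))) 0 = 0 := by simp [vacBelow]
  simp only [vacBelow_insert_zero_image_succ, hV0, Nat.sub_zero, pow_zero, mul_one]
  have hbelow : ∀ y ∈ B.filter (· < x),
      qAnalogue q (m + 1 - #B - vacBelow (B.erase x) y) * q ^ (y + 1) =
        qAnalogue q (m + 1 - #B - vacBelow B y) * q ^ y * q := fun y hy => by
    rw [vacBelow_erase_of_le (mem_filter.mp hy).2.le, pow_succ, mul_assoc]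
  have habove : ∀ y ∈ B.filter (x < ·),
      qAnalogue q (m + 1 - #B - vacBelow (B.erase x) y) * q ^ (y + 1) =
        qAnalogue q (m + 1 - #B - (vacBelow B y + 1)) * q ^ (y + 1) := fun y hy => by
    rw [vacBelow_erase_of_lt hx (mem_filter.mp hy).2]
  have hpow : q ^ #(B.filter (· < x)) * q ^ vacBelow B x = q ^ x := by
    rw [← pow_add, add_comm, vacBelow_add_card_filter_lt]
  rw [prod_congr rfl hbelow, prod_congr rfl habove, prod_mul_distrib, prod_const, ← hpow]
  ring

theorem W_balance_general (m n : ℕ) (q : ℝ) (hq : q ∈ Set.Ioo (0 : ℝ) 1)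
    (B : Finset ℕ) (hB : B ⊆ Finset.range m) (hBcard : B.card = n) :
    Wext m q B =
      Wext m q (B.image (· + 1)) +
        ∑ x ∈ B,
          Wext m q (insert 0 ((B.erase x).image (· + 1))) *
            ((1 - q) / (1 - q ^ (m - n + 1))) * q ^ (x - (B.filter (· < x)).card) := by
  subst hBcard
  have hBm : #B ≤ m := by simpa using card_le_card hB
  rw [show m - #B + 1 = m + 1 - #B by omega]
  have hsplit : ∀ y ∈ B, qAnalogue q (m + 1 - #B - vacBelow B y) * q ^ y =
      qAnalogue q (m + 1 - #B - (vacBelow B y + 1)) * q ^ (y + 1) + q ^ y := fun y hy => by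
    have := vB_add_vacBelow hB (mem_range.mp (hB hy)).le
    exact qAnalogue_sub_mul_pow hq.2.ne (by omega) y
  have hcancel := qAnalogue_mul_div_cancel (k := m + 1 - #B)
    (pow_lt_one₀ hq.1.le hq.2 (by omega)).ne
  rw [Wext_eq_prod, prod_congr rfl hsplit, prod_add_ordered, Wext_image_succ]
  congr 1
  refine sum_congr rfl fun x hx => ?_
  have hexp : x - #(B.filter (· < x)) = vacBelow B x := by
    have := vacBelow_add_card_filter_lt B x
    omega
  symm
  rw [hexp, mul_right_comm, Wext_insert_zero_image_succ_erase_mul m q hx,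
    prod_congr rfl fun y hy => hsplit y (mem_filter.mp hy).1]
  linear_combination (q ^ x * (∏ y ∈ B with y < x, _) * ∏ y ∈ B with x < y, _) * hcancel

/-- The stationarity (balance) equation of the bounded geometric juggler's exclusion
process is solved by the weights `W_{m,q}`: for every `n`-element subset
`B = {i_1 < ... < i_n}` of `{0, ..., m-1}`,
`W(B) = W(B+1) + Σ_{x ∈ B} W({0} ∪ ((B \ {x}) + 1)) * ((1-q)/(1-q^ℓ)) * q^(x - s(x))`,
where `ℓ = m - n + 1` and `s(x) = |{b ∈ B : b < x}|` (so that if `x = i_k` then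
`s(x) = k - 1`). -/
theorem W_balance (m n : ℕ) (hn : 1 ≤ n) (hm : n ≤ m) (q : ℝ) (hq : q ∈ Set.Ioo (0 : ℝ) 1)
    (B : Finset ℕ) (hB : B ⊆ Finset.range m) (hBcard : B.card = n) :
    Wext m q B =
      Wext m q (B.image (· + 1)) +
        ∑ x ∈ B,
          Wext m q (insert 0 ((B.erase x).image (· + 1))) *
            ((1 - q) / (1 - q ^ (m - n + 1))) * q ^ (x - (B.filter (· < x)).card) :=
  W_balance_general m n q hq B hB hBcard
end
end

section
/- Let S and I be countable sets and f : S × I → S a function. Let μ and μ̂ be probability distributions on S, and let ν and ν̂ be probability distributions on I. Define the t-step laws by μ_0 = μ and μ_{t+1}(B) = Σ_{A∈S} μ_t(A) · ν({i ∈ I : f(A,i) = B}) for B ∈ S, and analogously μ̂_0 = μ̂ and μ̂_{t+1}(B) = Σ_{A∈S} μ̂_t(A) · ν̂({i ∈ I : f(A,i) = B}). Then for every t ≥ 0: ‖μ_t − μ̂_t‖_TV ≤ 1 − (1 − ‖μ − μ̂‖_TV)(1 − ‖ν − ν̂‖_TV)^t. -/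
noncomputable section

namespace CouplingAux

variable {S I : Type*} [DecidableEq S]

lemma inner_nonneg (f : S × I → S) {ν : I → ℝ} (hν0 : ∀ i, 0 ≤ ν i) (A B : S) :
    0 ≤ ∑' i, if f (A, i) = B then ν i else 0 :=
  tsum_nonneg fun i => by split; exacts [hν0 i, le_rfl]

lemma hasSum_inner (f : S × I → S) {ν : I → ℝ} (hν : Summable ν) (A : S) :
    HasSum (fun B => ∑' i, if f (A, i) = B then ν i else 0) (∑' i, ν i) := by
  have h := hν.hasSum.tsum_fiberwise (fun i => f (A, i))
  have he : (fun B => ∑' i, if f (A, i) = B then ν i else 0)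
      = fun B => ∑' i : (fun i => f (A, i)) ⁻¹' {B}, ν i := by
    funext B
    rw [tsum_subtype]
    exact tsum_congr fun i => by
      by_cases h : f (A, i) = B <;>
        simp [Set.indicator_apply, Set.mem_preimage, Set.mem_singleton_iff, h]
  rw [he]
  exact h

lemma summable_ite (f : S × I → S) {ν : I → ℝ} (hν0 : ∀ i, 0 ≤ ν i) (hν : Summable ν)
    (A B : S) : Summable (fun i => if f (A, i) = B then ν i else 0) :=
  Summable.of_nonneg_of_le (fun i => by split; exacts [hν0 i, le_rfl])
    (fun i => by split; exacts [le_rfl, hν0 i]) hν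

lemma inner_le_tsum (f : S × I → S) {ν : I → ℝ} (hν0 : ∀ i, 0 ≤ ν i) (hν : Summable ν)
    (A B : S) : (∑' i, if f (A, i) = B then ν i else 0) ≤ ∑' i, ν i :=
  Summable.tsum_le_tsum (fun i => by split; exacts [le_rfl, hν0 i])
    (summable_ite f hν0 hν A B) hν

/-- Facts about the pushforward law `B ↦ ∑' A, a A * ∑' i, [f (A,i) = B] ν i`. -/
lemma newP_facts (f : S × I → S) {ν : I → ℝ} {a : S → ℝ}
    (hν0 : ∀ i, 0 ≤ ν i) (hν : Summable ν) (ha0 : ∀ A, 0 ≤ a A) (ha : Summable a) :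
    (∀ B, Summable fun A => a A * ∑' i, if f (A, i) = B then ν i else 0) ∧
    Summable (fun B => ∑' A, a A * ∑' i, if f (A, i) = B then ν i else 0) ∧
    (∑' B, ∑' A, a A * ∑' i, if f (A, i) = B then ν i else 0)
      = (∑' A, a A) * (∑' i, ν i) := by
  set F : S → S → ℝ := fun A B => a A * ∑' i, if f (A, i) = B then ν i else 0 with hF
  have hFnn : ∀ A B, 0 ≤ F A B := fun A B =>
    mul_nonneg (ha0 A) (inner_nonneg f hν0 A B)
  have hrow : ∀ A, Summable (fun B => F A B) :=
    fun A => ((hasSum_inner f hν A).mul_left (a A)).summable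
  have hrowsum : ∀ A, (∑' B, F A B) = a A * ∑' i, ν i :=
    fun A => ((hasSum_inner f hν A).mul_left (a A)).tsum_eq
  have hU : Summable (Function.uncurry F) := by
    refine (summable_prod_of_nonneg (fun p => hFnn p.1 p.2)).mpr ⟨fun A => hrow A, ?_⟩
    have : (fun x : S => ∑' y : S, F (x, y).1 (x, y).2) = fun A => a A * ∑' i, ν i := by
      funext A; exact hrowsum A
    rw [this]
    exact ha.mul_right _
  have hcol : ∀ B, Summable fun A => F A B := fun B =>
    Summable.of_nonneg_of_le (fun A => hFnn A B)
      (fun A => mul_le_mul_of_nonneg_left (inner_le_tsum f hν0 hν A B) (ha0 A))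
      (ha.mul_right _)
  refine ⟨hcol, ?_, ?_⟩
  · have := hU.prod_symm.prod
    simpa using this
  · rw [Summable.tsum_comm hU]
    calc (∑' A, ∑' B, F A B) = ∑' A, a A * ∑' i, ν i := tsum_congr hrowsum
    _ = (∑' A, a A) * (∑' i, ν i) := ha.tsum_mul_right _

lemma half_abs_eq {α : Type*} {a b : α → ℝ}
    (ha0 : ∀ x, 0 ≤ a x) (hb0 : ∀ x, 0 ≤ b x) (ha : Summable a) (hb : Summable b)
    (ha1 : ∑' x, a x = 1) (hb1 : ∑' x, b x = 1) :
    (1 / 2) * ∑' x, |a x - b x| = 1 - ∑' x, min (a x) (b x) := by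
  have habs : Summable fun x => |a x - b x| := (ha.sub hb).abs
  have hmin : Summable fun x => min (a x) (b x) :=
    Summable.of_nonneg_of_le (fun x => le_min (ha0 x) (hb0 x))
      (fun x => min_le_left _ _) ha
  have key : ∀ x, min (a x) (b x) = (a x + b x - |a x - b x|) / 2 := by
    intro x
    rcases le_total (a x) (b x) with h | h
    · rw [min_eq_left h, abs_of_nonpos (by linarith)]; ring
    · rw [min_eq_right h, abs_of_nonneg (by linarith)]; ring
  have : (∑' x, min (a x) (b x)) = (∑' x, (a x + b x - |a x - b x|)) / 2 := by
    rw [← tsum_div_const]; exact tsum_congr key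
  rw [this, Summable.tsum_sub (ha.add hb) habs, Summable.tsum_add ha hb, ha1, hb1]
  ring

/-- Core coupling step: the overlap mass does not shrink more than by factor `∑ min ν ν'`. -/
lemma step_min (f : S × I → S) {ν ν' : I → ℝ} {a b : S → ℝ}
    (hν0 : ∀ i, 0 ≤ ν i) (hν : Summable ν)
    (hν'0 : ∀ i, 0 ≤ ν' i) (hν' : Summable ν')
    (ha0 : ∀ A, 0 ≤ a A) (ha : Summable a)
    (hb0 : ∀ A, 0 ≤ b A) (hb : Summable b) :
    (∑' A, min (a A) (b A)) * (∑' i, min (ν i) (ν' i)) ≤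
      ∑' B, min (∑' A, a A * ∑' i, if f (A, i) = B then ν i else 0)
                (∑' A, b A * ∑' i, if f (A, i) = B then ν' i else 0) := by
  set w : I → ℝ := fun i => min (ν i) (ν' i) with hw
  set m : S → ℝ := fun A => min (a A) (b A) with hm
  have hw0 : ∀ i, 0 ≤ w i := fun i => le_min (hν0 i) (hν'0 i)
  have hwS : Summable w :=
    Summable.of_nonneg_of_le hw0 (fun i => min_le_left _ _) hν
  have hm0 : ∀ A, 0 ≤ m A := fun A => le_min (ha0 A) (hb0 A)
  have hmS : Summable m :=
    Summable.of_nonneg_of_le hm0 (fun A => min_le_left _ _) ha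
  obtain ⟨hcolm, hsumm, htotm⟩ := newP_facts f hw0 hwS hm0 hmS
  obtain ⟨hcola, hsuma, -⟩ := newP_facts f hν0 hν ha0 ha
  obtain ⟨hcolb, hsumb, -⟩ := newP_facts f hν'0 hν' hb0 hb
  rw [← htotm]
  -- termwise bound over B
  have key : ∀ B, (∑' A, m A * ∑' i, if f (A, i) = B then w i else 0) ≤
      min (∑' A, a A * ∑' i, if f (A, i) = B then ν i else 0)
          (∑' A, b A * ∑' i, if f (A, i) = B then ν' i else 0) := by
    intro B
    have hQP : ∀ A, (∑' i, if f (A, i) = B then w i else 0) ≤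
        ∑' i, if f (A, i) = B then ν i else 0 :=
      fun A => Summable.tsum_le_tsum (fun i => by split; exacts [min_le_left _ _, le_rfl])
        (summable_ite f hw0 hwS A B) (summable_ite f hν0 hν A B)
    have hQP' : ∀ A, (∑' i, if f (A, i) = B then w i else 0) ≤
        ∑' i, if f (A, i) = B then ν' i else 0 :=
      fun A => Summable.tsum_le_tsum (fun i => by split; exacts [min_le_right _ _, le_rfl])
        (summable_ite f hw0 hwS A B) (summable_ite f hν'0 hν' A B)
    refine le_min ?_ ?_
    · exact Summable.tsum_le_tsum (fun A => mul_le_mul (min_le_left _ _) (hQP A)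
        (inner_nonneg f hw0 A B) (ha0 A)) (hcolm B) (hcola B)
    · exact Summable.tsum_le_tsum (fun A => mul_le_mul (min_le_right _ _) (hQP' A)
        (inner_nonneg f hw0 A B) (hb0 A)) (hcolm B) (hcolb B)
  refine Summable.tsum_le_tsum key hsumm ?_
  exact Summable.of_nonneg_of_le
    (fun B => le_min (tsum_nonneg fun A => mul_nonneg (ha0 A) (inner_nonneg f hν0 A B))
      (tsum_nonneg fun A => mul_nonneg (hb0 A) (inner_nonneg f hν'0 A B)))
    (fun B => min_le_left _ _) hsuma

end CouplingAux

open CouplingAux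

/-- The coupling lemma: consider two Markov chains on a countable state space `S` driven
by i.i.d. innovations in a countable set `I` via an update function `f : S × I → S`,
with innovation distributions `ν` and `ν'` and initial distributions `μ` and `μ'`.
If `μseq t` and `μ'seq t` denote the respective laws at time `t`, then
`‖μseq t - μ'seq t‖_TV ≤ 1 - (1 - ‖μ - μ'‖_TV)(1 - ‖ν - ν'‖_TV)^t`,
where `‖α - β‖_TV = (1/2) Σ |α(x) - β(x)|`. -/
theorem coupling_tv_bound {S I : Type*} [Countable S] [Countable I] [DecidableEq S]
    (f : S × I → S) (μ μ' : S → ℝ) (ν ν' : I → ℝ)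
    (hμ0 : ∀ A, 0 ≤ μ A) (hμ1 : ∑' A, μ A = 1)
    (hμ'0 : ∀ A, 0 ≤ μ' A) (hμ'1 : ∑' A, μ' A = 1)
    (hν0 : ∀ i, 0 ≤ ν i) (hν1 : ∑' i, ν i = 1)
    (hν'0 : ∀ i, 0 ≤ ν' i) (hν'1 : ∑' i, ν' i = 1)
    (μseq μ'seq : ℕ → S → ℝ)
    (h0 : μseq 0 = μ) (h0' : μ'seq 0 = μ')
    (hstep : ∀ t B, μseq (t + 1) B =
      ∑' A, μseq t A * ∑' i, if f (A, i) = B then ν i else 0)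
    (hstep' : ∀ t B, μ'seq (t + 1) B =
      ∑' A, μ'seq t A * ∑' i, if f (A, i) = B then ν' i else 0)
    (t : ℕ) :
    (1 / 2) * ∑' B, |μseq t B - μ'seq t B| ≤
      1 - (1 - (1 / 2) * ∑' A, |μ A - μ' A|) * (1 - (1 / 2) * ∑' i, |ν i - ν' i|) ^ t := by
  -- summability of the given distributions
  have sμ : Summable μ := by
    by_contra h; rw [tsum_eq_zero_of_not_summable h] at hμ1; norm_num at hμ1
  have sμ' : Summable μ' := by
    by_contra h; rw [tsum_eq_zero_of_not_summable h] at hμ'1; norm_num at hμ'1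
  have sν : Summable ν := by
    by_contra h; rw [tsum_eq_zero_of_not_summable h] at hν1; norm_num at hν1
  have sν' : Summable ν' := by
    by_contra h; rw [tsum_eq_zero_of_not_summable h] at hν'1; norm_num at hν'1
  -- the laws at each time are probability distributions
  have props : ∀ t, (∀ B, 0 ≤ μseq t B) ∧ Summable (μseq t) ∧ (∑' B, μseq t B) = 1 := by
    intro t
    induction t with
    | zero => rw [h0]; exact ⟨hμ0, sμ, hμ1⟩
    | succ t ih =>
      obtain ⟨hp0, hpS, hp1⟩ := ih
      have he : μseq (t + 1) = fun B =>
          ∑' A, μseq t A * ∑' i, if f (A, i) = B then ν i else 0 := funext (hstep t)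
      obtain ⟨-, hS, hT⟩ := newP_facts f hν0 sν hp0 hpS
      refine ⟨?_, ?_, ?_⟩
      · intro B; rw [he]
        exact tsum_nonneg fun A => mul_nonneg (hp0 A) (inner_nonneg f hν0 A B)
      · rw [he]; exact hS
      · rw [he, hT, hp1, hν1]; norm_num
  have props' : ∀ t, (∀ B, 0 ≤ μ'seq t B) ∧ Summable (μ'seq t) ∧ (∑' B, μ'seq t B) = 1 := by
    intro t
    induction t with
    | zero => rw [h0']; exact ⟨hμ'0, sμ', hμ'1⟩
    | succ t ih =>
      obtain ⟨hp0, hpS, hp1⟩ := ih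
      have he : μ'seq (t + 1) = fun B =>
          ∑' A, μ'seq t A * ∑' i, if f (A, i) = B then ν' i else 0 := funext (hstep' t)
      obtain ⟨-, hS, hT⟩ := newP_facts f hν'0 sν' hp0 hpS
      refine ⟨?_, ?_, ?_⟩
      · intro B; rw [he]
        exact tsum_nonneg fun A => mul_nonneg (hp0 A) (inner_nonneg f hν'0 A B)
      · rw [he]; exact hS
      · rw [he, hT, hp1, hν'1]; norm_num
  -- overlap masses
  set c : ℝ := ∑' i, min (ν i) (ν' i) with hc
  have hc0 : 0 ≤ c := tsum_nonneg fun i => le_min (hν0 i) (hν'0 i)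
  set m : ℕ → ℝ := fun t => ∑' B, min (μseq t B) (μ'seq t B) with hm
  -- key induction: overlap mass is at least m 0 * c ^ t
  have hmono : ∀ t, m 0 * c ^ t ≤ m t := by
    intro t
    induction t with
    | zero => simp
    | succ t ih =>
      obtain ⟨hp0, hpS, -⟩ := props t
      obtain ⟨hp'0, hp'S, -⟩ := props' t
      have hstepmin : m t * c ≤ m (t + 1) := by
        have := step_min f hν0 sν hν'0 sν' hp0 hpS hp'0 hp'S
        have he : (fun B =>
            min (∑' A, μseq t A * ∑' i, if f (A, i) = B then ν i else 0)
                (∑' A, μ'seq t A * ∑' i, if f (A, i) = B then ν' i else 0))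
            = fun B => min (μseq (t + 1) B) (μ'seq (t + 1) B) := by
          funext B; rw [hstep t B, hstep' t B]
        calc m t * c ≤ _ := this
        _ = m (t + 1) := by rw [hm]; exact congrArg tsum he
      calc m 0 * c ^ (t + 1) = (m 0 * c ^ t) * c := by ring
      _ ≤ m t * c := mul_le_mul_of_nonneg_right ih hc0
      _ ≤ m (t + 1) := hstepmin
  -- translate TV distances into overlap masses
  obtain ⟨hp0, hpS, hp1⟩ := props t
  obtain ⟨hp'0, hp'S, hp'1⟩ := props' t
  have hTVt : (1 / 2) * ∑' B, |μseq t B - μ'seq t B| = 1 - m t :=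
    half_abs_eq hp0 hp'0 hpS hp'S hp1 hp'1
  have hTV0 : (1 / 2) * ∑' A, |μ A - μ' A| = 1 - m 0 := by
    rw [half_abs_eq hμ0 hμ'0 sμ sμ' hμ1 hμ'1]
    have hm0 : m 0 = ∑' B, min (μseq 0 B) (μ'seq 0 B) := rfl
    rw [hm0, h0, h0']
  have hTVν : (1 / 2) * ∑' i, |ν i - ν' i| = 1 - c :=
    half_abs_eq hν0 hν'0 sν sν' hν1 hν'1
  rw [hTVt, hTV0, hTVν]
  have := hmono t
  have h1 : (1 - (1 - m 0)) * (1 - (1 - c)) ^ t = m 0 * c ^ t := by ring_nf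
  rw [h1]
  linarith

end
end

section
/- Let m and n be integers with 1 ≤ n ≤ m. Then the extended juggling dynamics on C_n(S_{m+1}) is irreducible and aperiodic in the following combinatorial sense: (a) for any two configurations C, C′ ∈ C_n(S_{m+1}) there exists a finite sequence C = C_0, C_1, ..., C_T = C′ in C_n(S_{m+1}) such that C_{t+1} is a successor of C_t for every 0 ≤ t < T; and (b) the extended ground state D = {(k, n−1−k) : 0 ≤ k ≤ n−1} is a successor of itself. -/
noncomputable section

/-- The staircase Ferrers board `S_{m+1}`: cells `(c, r)` with `c + r ≤ m - 1`
(equivalently `c + r < m`). -/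
def board (m : ℕ) : Finset (ℕ × ℕ) :=
  (Finset.range m ×ˢ Finset.range m).filter (fun p => p.1 + p.2 < m)

/-- `C_n(S_{m+1})`: configurations of `n` non-attacking rooks on the staircase board
`S_{m+1}`. -/
def configs (m n : ℕ) : Finset (Finset (ℕ × ℕ)) :=
  ((board m).powersetCard n).filter
    (fun C => (∀ p ∈ C, ∀ p' ∈ C, p.1 = p'.1 → p = p') ∧
      ∀ p ∈ C, ∀ p' ∈ C, p.2 = p'.2 → p = p')

/-- `C'` is a successor of `C` in the extended juggling dynamics if either (i) `C` has no
rook in row `0` and `C' = {(c+1, r-1) : (c,r) ∈ C}` (waiting), or (ii) `C` has a rook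
`(c₀, 0)` in row `0` and `C' = {(c+1, r-1) : (c,r) ∈ C, r ≥ 1} ∪ {(0, ρ)}` for some
`ρ ∈ {0, ..., m-1}` not among `{r-1 : (c,r) ∈ C, r ≥ 1}` (a throw). -/
def succRel (m : ℕ) (C C' : Finset (ℕ × ℕ)) : Prop :=
  ((¬∃ p ∈ C, p.2 = 0) ∧ C' = C.image (fun p => (p.1 + 1, p.2 - 1))) ∨
    (∃ c₀, (c₀, 0) ∈ C ∧ ∃ ρ < m,
      ρ ∉ (C.filter (fun p => 1 ≤ p.2)).image (fun p => p.2 - 1) ∧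
      C' = insert (0, ρ) ((C.filter (fun p => 1 ≤ p.2)).image (fun p => (p.1 + 1, p.2 - 1))))

/-- The extended ground state: rooks on the `n`-diagonal, `{(k, n-1-k) : 0 ≤ k ≤ n-1}`. -/
def groundState (n : ℕ) : Finset (ℕ × ℕ) :=
  (Finset.range n).image (fun k => (k, n - 1 - k))

namespace ExtJug

open Finset

lemma mem_board {m : ℕ} {p : ℕ × ℕ} : p ∈ board m ↔ p.1 + p.2 < m := by
  simp only [board, Finset.mem_filter, Finset.mem_product, Finset.mem_range]
  omega

lemma mem_configs {m n : ℕ} {C : Finset (ℕ × ℕ)} :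
    C ∈ configs m n ↔ (∀ p ∈ C, p.1 + p.2 < m) ∧ C.card = n ∧
      (∀ p ∈ C, ∀ p' ∈ C, p.1 = p'.1 → p = p') ∧
      (∀ p ∈ C, ∀ p' ∈ C, p.2 = p'.2 → p = p') := by
  simp only [configs, Finset.mem_filter, Finset.mem_powersetCard]
  constructor
  · rintro ⟨⟨hsub, hcard⟩, h1, h2⟩
    exact ⟨fun p hp => mem_board.1 (hsub hp), hcard, h1, h2⟩
  · rintro ⟨hb, hcard, h1, h2⟩
    exact ⟨⟨fun p hp => mem_board.2 (hb p hp), hcard⟩, h1, h2⟩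


lemma exists_not_mem (S : Finset ℕ) : ∃ ρ, ρ ∉ S := by
  refine ⟨S.sup id + 1, fun h => ?_⟩
  have h2 : id (S.sup id + 1) ≤ S.sup id := Finset.le_sup h
  simp only [id] at h2
  omega

/-- The set `{r - 1 : (c, r) ∈ C, r ≥ 1}` of rows occupied after shifting. -/
def shiftedRows (C : Finset (ℕ × ℕ)) : Finset ℕ :=
  (C.filter (fun p => 1 ≤ p.2)).image (fun p => p.2 - 1)

/-- Lowest free row after shifting. -/
def freeRow (C : Finset (ℕ × ℕ)) : ℕ := Nat.find (exists_not_mem (shiftedRows C))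

lemma freeRow_notMem (C : Finset (ℕ × ℕ)) : freeRow C ∉ shiftedRows C :=
  Nat.find_spec (exists_not_mem (shiftedRows C))

lemma mem_of_lt_freeRow {C : Finset (ℕ × ℕ)} {k : ℕ} (h : k < freeRow C) :
    k ∈ shiftedRows C := by
  have := Nat.find_min (exists_not_mem (shiftedRows C)) h
  simpa using this

lemma freeRow_le_card (C : Finset (ℕ × ℕ)) : freeRow C ≤ (shiftedRows C).card := by
  by_contra h
  push_neg at h
  have hsub : Finset.range ((shiftedRows C).card + 1) ⊆ shiftedRows C := fun k hk => by
    exact mem_of_lt_freeRow (lt_of_lt_of_le (Finset.mem_range.1 hk) h)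
  have := Finset.card_le_card hsub
  simp at this

open Classical in
/-- Canonical step: wait if no rook in row 0, otherwise throw to the lowest free row. -/
def step (C : Finset (ℕ × ℕ)) : Finset (ℕ × ℕ) :=
  if ∃ p ∈ C, p.2 = 0 then
    insert (0, freeRow C) ((C.filter (fun p => 1 ≤ p.2)).image (fun p => (p.1 + 1, p.2 - 1)))
  else C.image (fun p => (p.1 + 1, p.2 - 1))


lemma row0_decomp {C : Finset (ℕ × ℕ)} {c₀ : ℕ}
    (hrow : ∀ p ∈ C, ∀ p' ∈ C, p.2 = p'.2 → p = p') (hc : (c₀, 0) ∈ C) :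
    C = insert (c₀, 0) (C.filter (fun p => 1 ≤ p.2)) ∧
      (c₀, 0) ∉ C.filter (fun p => 1 ≤ p.2) := by
  constructor
  · ext p
    simp only [Finset.mem_insert, Finset.mem_filter]
    constructor
    · intro hp
      rcases Nat.eq_zero_or_pos p.2 with hz | h1
      · left; exact hrow p hp (c₀, 0) hc hz
      · right; exact ⟨hp, h1⟩
    · rintro (rfl | ⟨hp, _⟩)
      · exact hc
      · exact hp
  · simp

lemma shift_injOn {C F : Finset (ℕ × ℕ)} (hF : F ⊆ C)
    (hcol : ∀ p ∈ C, ∀ p' ∈ C, p.1 = p'.1 → p = p') :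
    Set.InjOn (fun p : ℕ × ℕ => (p.1 + 1, p.2 - 1)) F := by
  intro p hp q hq h
  simp only [Prod.mk.injEq] at h
  exact hcol p (hF hp) q (hF hq) (by omega)

lemma snd_injOn {C F : Finset (ℕ × ℕ)} (hF : F ⊆ C.filter (fun p => 1 ≤ p.2))
    (hrow : ∀ p ∈ C, ∀ p' ∈ C, p.2 = p'.2 → p = p') :
    Set.InjOn (fun p : ℕ × ℕ => p.2 - 1) F := by
  intro p hp q hq h
  simp only at h
  have hp' := Finset.mem_filter.1 (hF hp)
  have hq' := Finset.mem_filter.1 (hF hq)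
  exact hrow p hp'.1 q hq'.1 (by omega)

lemma step_spec {m n : ℕ} {C : Finset (ℕ × ℕ)} (hn : 1 ≤ n) (hm : n ≤ m)
    (hC : C ∈ configs m n) : step C ∈ configs m n ∧ succRel m C (step C) := by
  classical
  obtain ⟨hb, hcard, hcol, hrow⟩ := mem_configs.1 hC
  by_cases h0 : ∃ p ∈ C, p.2 = 0
  · -- throw case
    obtain ⟨⟨c₀, r₀⟩, hp0, hr0⟩ := h0
    simp only at hr0
    subst hr0
    set F := C.filter (fun p : ℕ × ℕ => 1 ≤ p.2) with hFdef
    obtain ⟨hCd, hni⟩ := row0_decomp hrow hp0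
    have hFsub : F ⊆ C := Finset.filter_subset _ _
    have hFcard : F.card = n - 1 := by
      have h2 := Finset.card_insert_of_notMem hni
      rw [← hCd, hcard] at h2
      rw [hFdef]
      omega
    have hstep : step C = insert (0, freeRow C)
        (F.image (fun p => (p.1 + 1, p.2 - 1))) := by
      rw [step, if_pos ⟨(c₀, 0), hp0, rfl⟩]
    have himgcard : (F.image (fun p => (p.1 + 1, p.2 - 1))).card = n - 1 := by
      rw [Finset.card_image_of_injOn (shift_injOn hFsub hcol), hFcard]
    have hrfresh : freeRow C ∉ shiftedRows C := freeRow_notMem C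
    have hScard : (shiftedRows C).card = n - 1 := by
      rw [shiftedRows, Finset.card_image_of_injOn (snd_injOn (le_refl _) hrow), hFcard]
    have hfrlt : freeRow C < m := by
      have := freeRow_le_card C
      omega
    have hnotin : (0, freeRow C) ∉ F.image (fun p => (p.1 + 1, p.2 - 1)) := by
      simp only [Finset.mem_image, Prod.mk.injEq, not_exists]
      rintro p ⟨-, h1, -⟩
      omega
    have hmemS : ∀ q ∈ F.image (fun p : ℕ × ℕ => (p.1 + 1, p.2 - 1)),
        q.2 ∈ shiftedRows C := by
      rintro q hq
      obtain ⟨p, hp, rfl⟩ := Finset.mem_image.1 hq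
      exact Finset.mem_image.2 ⟨p, hp, rfl⟩
    refine ⟨mem_configs.2 ⟨?_, ?_, ?_, ?_⟩, Or.inr ⟨c₀, hp0, freeRow C, hfrlt, hrfresh, hstep⟩⟩
    · -- board
      rw [hstep]
      intro p hp
      rcases Finset.mem_insert.1 hp with rfl | hp'
      · simpa using hfrlt
      · obtain ⟨q, hq, rfl⟩ := Finset.mem_image.1 hp'
        have h1 := (Finset.mem_filter.1 hq).2
        have h2 := hb q (hFsub hq)
        simp only
        omega
    · rw [hstep, Finset.card_insert_of_notMem hnotin, himgcard]
      omega
    · -- column injectivity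
      rw [hstep]
      intro p hp p' hp' heq
      rcases Finset.mem_insert.1 hp with rfl | hp1 <;>
        rcases Finset.mem_insert.1 hp' with h | hp2
      · rw [h]
      · obtain ⟨q, hq, rfl⟩ := Finset.mem_image.1 hp2
        simp only at heq
        omega
      · obtain ⟨q, hq, rfl⟩ := Finset.mem_image.1 hp1
        subst h
        simp only at heq
        exact (by omega : False).elim
      · obtain ⟨q, hq, rfl⟩ := Finset.mem_image.1 hp1
        obtain ⟨q', hq', rfl⟩ := Finset.mem_image.1 hp2
        simp only at heq
        have := hcol q (hFsub hq) q' (hFsub hq') (by omega)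
        rw [this]
    · -- row injectivity
      rw [hstep]
      intro p hp p' hp' heq
      rcases Finset.mem_insert.1 hp with rfl | hp1 <;>
        rcases Finset.mem_insert.1 hp' with h | hp2
      · rw [h]
      · have hin := hmemS _ hp2
        rw [← heq] at hin
        exact absurd hin hrfresh
      · subst h
        have hin := hmemS _ hp1
        rw [heq] at hin
        exact absurd hin hrfresh
      · obtain ⟨q, hq, rfl⟩ := Finset.mem_image.1 hp1
        obtain ⟨q', hq', rfl⟩ := Finset.mem_image.1 hp2
        simp only at heq
        have h1 := (Finset.mem_filter.1 hq).2
        have h2 := (Finset.mem_filter.1 hq').2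
        have := hrow q (hFsub hq) q' (hFsub hq') (by omega)
        rw [this]
  ·
    have hpos : ∀ p ∈ C, 1 ≤ p.2 := by
      intro p hp
      by_contra h
      exact h0 ⟨p, hp, by omega⟩
    have hstep : step C = C.image (fun p => (p.1 + 1, p.2 - 1)) := by
      rw [step, if_neg h0]
    refine ⟨mem_configs.2 ⟨?_, ?_, ?_, ?_⟩, Or.inl ⟨h0, hstep⟩⟩
    · rw [hstep]
      intro p hp
      obtain ⟨q, hq, rfl⟩ := Finset.mem_image.1 hp
      have := hb q hq
      have := hpos q hq
      simp only
      omega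
    · rw [hstep, Finset.card_image_of_injOn (shift_injOn (le_refl _) hcol), hcard]
    · rw [hstep]
      intro p hp p' hp' heq
      obtain ⟨q, hq, rfl⟩ := Finset.mem_image.1 hp
      obtain ⟨q', hq', rfl⟩ := Finset.mem_image.1 hp'
      simp only at heq
      have := hcol q hq q' hq' (by omega)
      rw [this]
    · rw [hstep]
      intro p hp p' hp' heq
      obtain ⟨q, hq, rfl⟩ := Finset.mem_image.1 hp
      obtain ⟨q', hq', rfl⟩ := Finset.mem_image.1 hp'
      simp only at heq
      have h1 := hpos q hq
      have h2 := hpos q' hq'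
      have := hrow q hq q' hq' (by omega)
      rw [this]


def rowsOf (C : Finset (ℕ × ℕ)) : Finset ℕ := C.image Prod.snd

def meas (C : Finset (ℕ × ℕ)) : ℕ := ∑ p ∈ C, p.2

lemma mem_rowsOf {C : Finset (ℕ × ℕ)} {r : ℕ} : r ∈ rowsOf C ↔ ∃ p ∈ C, p.2 = r := by
  simp [rowsOf]

lemma mem_shiftedRows {C : Finset (ℕ × ℕ)} {x : ℕ} :
    x ∈ shiftedRows C ↔ x + 1 ∈ rowsOf C := by
  simp only [shiftedRows, rowsOf, Finset.mem_image, Finset.mem_filter]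
  constructor
  · rintro ⟨p, ⟨hp, h1⟩, hx⟩
    exact ⟨p, hp, by omega⟩
  · rintro ⟨p, hp, h2⟩
    exact ⟨p, ⟨hp, by omega⟩, by omega⟩

lemma rowsOf_card {m n : ℕ} {C : Finset (ℕ × ℕ)} (hC : C ∈ configs m n) :
    (rowsOf C).card = n := by
  obtain ⟨hb, hcard, hcol, hrow⟩ := mem_configs.1 hC
  rw [rowsOf, Finset.card_image_of_injOn, hcard]
  intro p hp q hq h
  exact hrow p hp q hq h

lemma shiftedRows_card {m n : ℕ} {C : Finset (ℕ × ℕ)} (hC : C ∈ configs m n)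
    (h0 : ∃ p ∈ C, p.2 = 0) : (shiftedRows C).card = n - 1 := by
  obtain ⟨hb, hcard, hcol, hrow⟩ := mem_configs.1 hC
  obtain ⟨⟨c₀, r₀⟩, hp0, hr0⟩ := h0
  simp only at hr0
  subst hr0
  obtain ⟨hCd, hni⟩ := row0_decomp hrow hp0
  have h2 := Finset.card_insert_of_notMem hni
  rw [← hCd, hcard] at h2
  rw [shiftedRows, Finset.card_image_of_injOn (snd_injOn (le_refl _) hrow)]
  omega

/-- If the rows are `{0, …, n-1}` then the lowest free row is `n - 1`. -/
lemma freeRow_eq_of_rows {m n : ℕ} {C : Finset (ℕ × ℕ)} (hn : 1 ≤ n) (hC : C ∈ configs m n)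
    (hr : rowsOf C = Finset.range n) : freeRow C = n - 1 := by
  have hS : shiftedRows C = Finset.range (n - 1) := by
    ext x
    rw [mem_shiftedRows, hr, Finset.mem_range, Finset.mem_range]
    omega
  refine le_antisymm (Nat.find_le ?_) ?_
  · rw [hS]; simp
  · have h2 := freeRow_notMem C
    rw [hS, Finset.mem_range] at h2
    omega

/-- If the lowest free row is `n - 1` (the max possible), the rows are `{0, …, n-1}`. -/
lemma rows_eq_of_freeRow {m n : ℕ} {C : Finset (ℕ × ℕ)} (hn : 1 ≤ n) (hC : C ∈ configs m n)
    (h0 : ∃ p ∈ C, p.2 = 0) (hf : n - 1 ≤ freeRow C) : rowsOf C = Finset.range n := by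
  have hScard := shiftedRows_card hC h0
  have hS : shiftedRows C = Finset.range (n - 1) := by
    refine (Finset.eq_of_subset_of_card_le (fun k hk => mem_of_lt_freeRow ?_) ?_).symm
    · have := Finset.mem_range.1 hk; omega
    · rw [hScard, Finset.card_range]
  refine Finset.eq_of_subset_of_card_le (fun r hr => ?_) ?_
  · rcases Nat.eq_zero_or_pos r with rfl | hr1
    · exact Finset.mem_range.2 hn
    · have : r - 1 ∈ shiftedRows C := mem_shiftedRows.2 (by rwa [Nat.sub_add_cancel hr1])
      rw [hS, Finset.mem_range] at this
      exact Finset.mem_range.2 (by omega)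
  · rw [rowsOf_card hC, Finset.card_range]


lemma rowsOf_step {m n : ℕ} {C : Finset (ℕ × ℕ)} (hn : 1 ≤ n) (hC : C ∈ configs m n)
    (hr : rowsOf C = Finset.range n) : rowsOf (step C) = Finset.range n := by
  have h0 : ∃ p ∈ C, p.2 = 0 := mem_rowsOf.1 (hr ▸ Finset.mem_range.2 hn)
  have hstep : step C = insert (0, freeRow C)
      ((C.filter (fun p => 1 ≤ p.2)).image (fun p => (p.1 + 1, p.2 - 1))) := by
    rw [step, if_pos h0]
  have hfr : freeRow C = n - 1 := freeRow_eq_of_rows hn hC hr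
  have hrows_img : rowsOf ((C.filter (fun p : ℕ × ℕ => 1 ≤ p.2)).image
      (fun p => (p.1 + 1, p.2 - 1))) = shiftedRows C := by
    rw [rowsOf, Finset.image_image, shiftedRows]
    rfl
  have hS : shiftedRows C = Finset.range (n - 1) := by
    ext x
    rw [mem_shiftedRows, hr, Finset.mem_range, Finset.mem_range]
    omega
  rw [hstep, rowsOf, Finset.image_insert]
  rw [rowsOf] at hrows_img
  rw [hrows_img, hS, hfr]
  ext x
  simp only [Finset.mem_insert, Finset.mem_range]
  omega

lemma meas_step_lt {m n : ℕ} {C : Finset (ℕ × ℕ)} (hn : 1 ≤ n) (hm : n ≤ m)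
    (hC : C ∈ configs m n) (hne : rowsOf C ≠ Finset.range n) :
    meas (step C) < meas C := by
  classical
  obtain ⟨hb, hcard, hcol, hrow⟩ := mem_configs.1 hC
  by_cases h0 : ∃ p ∈ C, p.2 = 0
  · -- throw case
    obtain ⟨⟨c₀, r₀⟩, hp0, hr0⟩ := h0
    simp only at hr0
    subst hr0
    obtain ⟨hCd, hni⟩ := row0_decomp hrow hp0
    have hScard := shiftedRows_card hC ⟨(c₀, 0), hp0, rfl⟩
    have hfr2 : freeRow C < n - 1 := by
      have h1 := freeRow_le_card C
      have h2 : ¬ (n - 1 ≤ freeRow C) := fun h => hne (rows_eq_of_freeRow hn hC ⟨(c₀, 0), hp0, rfl⟩ h)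
      omega
    have hstep : step C = insert (0, freeRow C)
        ((C.filter (fun p => 1 ≤ p.2)).image (fun p => (p.1 + 1, p.2 - 1))) := by
      rw [step, if_pos ⟨(c₀, 0), hp0, rfl⟩]
    have hnotin : (0, freeRow C) ∉ (C.filter (fun p : ℕ × ℕ => 1 ≤ p.2)).image
        (fun p => (p.1 + 1, p.2 - 1)) := by
      simp only [Finset.mem_image, Prod.mk.injEq, not_exists]
      rintro p ⟨-, h1, -⟩
      omega
    have hsum_img : ∑ p ∈ (C.filter (fun p : ℕ × ℕ => 1 ≤ p.2)).image
        (fun p => (p.1 + 1, p.2 - 1)), p.2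
        = ∑ p ∈ C.filter (fun p : ℕ × ℕ => 1 ≤ p.2), (p.2 - 1) := by
      rw [Finset.sum_image]
      exact fun p hp q hq h => shift_injOn (Finset.filter_subset _ _) hcol hp hq h
    have hFcard : (C.filter (fun p : ℕ × ℕ => 1 ≤ p.2)).card = n - 1 := by
      have h2 := Finset.card_insert_of_notMem hni
      rw [← hCd, hcard] at h2
      omega
    have hFsum : ∑ p ∈ C.filter (fun p : ℕ × ℕ => 1 ≤ p.2), p.2
        = (∑ p ∈ C.filter (fun p : ℕ × ℕ => 1 ≤ p.2), (p.2 - 1)) + (n - 1) := by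
      have hcg : ∀ p ∈ C.filter (fun p : ℕ × ℕ => 1 ≤ p.2), p.2 = (p.2 - 1) + 1 := fun p hp => by
        have := (Finset.mem_filter.1 hp).2; omega
      rw [Finset.sum_congr rfl hcg, Finset.sum_add_distrib, Finset.sum_const, smul_eq_mul,
        mul_one, hFcard]
    have hmeasC : meas C = ∑ p ∈ C.filter (fun p : ℕ × ℕ => 1 ≤ p.2), p.2 := by
      rw [meas]
      conv_lhs => rw [hCd]
      rw [Finset.sum_insert hni]
      simp
    have hmeasS : meas (step C) = freeRow C
        + ∑ p ∈ C.filter (fun p : ℕ × ℕ => 1 ≤ p.2), (p.2 - 1) := by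
      rw [meas, hstep, Finset.sum_insert hnotin, hsum_img]
    omega
  ·
    have hpos : ∀ p ∈ C, 1 ≤ p.2 := by
      intro p hp
      by_contra h
      exact h0 ⟨p, hp, by omega⟩
    have hstep : step C = C.image (fun p => (p.1 + 1, p.2 - 1)) := by
      rw [step, if_neg h0]
    have hsum_img : meas (step C) = ∑ p ∈ C, (p.2 - 1) := by
      rw [meas, hstep, Finset.sum_image]
      exact fun p hp q hq h => shift_injOn (le_refl _) hcol hp hq h
    rw [hsum_img, meas]
    refine Finset.sum_lt_sum_of_nonempty ?_ (fun p hp => by have := hpos p hp; omega)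
    rw [← Finset.card_pos, hcard]
    omega

lemma step_diag {m n k : ℕ} {C : Finset (ℕ × ℕ)} (hn : 1 ≤ n) (hC : C ∈ configs m n)
    (hr : rowsOf C = Finset.range n)
    (hd : ∀ p ∈ C, n - k ≤ p.2 → p.1 = n - 1 - p.2) :
    ∀ p ∈ step C, n - (k + 1) ≤ p.2 → p.1 = n - 1 - p.2 := by
  have h0 : ∃ p ∈ C, p.2 = 0 := mem_rowsOf.1 (hr ▸ Finset.mem_range.2 hn)
  have hstep : step C = insert (0, freeRow C)
      ((C.filter (fun p => 1 ≤ p.2)).image (fun p => (p.1 + 1, p.2 - 1))) := by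
    rw [step, if_pos h0]
  have hfr : freeRow C = n - 1 := freeRow_eq_of_rows hn hC hr
  rw [hstep, hfr]
  intro p hp hge
  rcases Finset.mem_insert.1 hp with rfl | hp'
  · simp only
    omega
  · obtain ⟨q, hq, rfl⟩ := Finset.mem_image.1 hp'
    obtain ⟨hqC, hq1⟩ := Finset.mem_filter.1 hq
    have hqlt : q.2 < n := by
      have : q.2 ∈ rowsOf C := mem_rowsOf.2 ⟨q, hqC, rfl⟩
      rw [hr, Finset.mem_range] at this
      exact this
    simp only at hge ⊢
    have := hd q hqC (by omega)
    omega


def Reach (m n : ℕ) (C C' : Finset (ℕ × ℕ)) : Prop :=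
  ∃ (T : ℕ) (g : ℕ → Finset (ℕ × ℕ)), g 0 = C ∧ g T = C' ∧
    (∀ t ≤ T, g t ∈ configs m n) ∧ ∀ t < T, succRel m (g t) (g (t + 1))

lemma Reach.refl {m n : ℕ} {C : Finset (ℕ × ℕ)} (hC : C ∈ configs m n) : Reach m n C C :=
  ⟨0, fun _ => C, rfl, rfl, fun _ _ => hC, fun t ht => absurd ht (by omega)⟩

lemma Reach.trans {m n : ℕ} {A B D : Finset (ℕ × ℕ)}
    (h1 : Reach m n A B) (h2 : Reach m n B D) : Reach m n A D := by
  obtain ⟨T1, g1, hg10, hg1T, hg1c, hg1s⟩ := h1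
  obtain ⟨T2, g2, hg20, hg2T, hg2c, hg2s⟩ := h2
  refine ⟨T1 + T2, fun t => if t ≤ T1 then g1 t else g2 (t - T1), by simp [hg10], ?_, ?_, ?_⟩
  · show (if T1 + T2 ≤ T1 then g1 (T1 + T2) else g2 (T1 + T2 - T1)) = D
    split_ifs with h
    · have hz : T2 = 0 := by omega
      subst hz
      rw [add_zero, hg1T, ← hg20]
      exact hg2T
    · rw [Nat.add_sub_cancel_left]
      exact hg2T
  · intro t ht
    show (if t ≤ T1 then g1 t else g2 (t - T1)) ∈ configs m n
    split_ifs with h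
    · exact hg1c t h
    · exact hg2c (t - T1) (by omega)
  · intro t ht
    show succRel m (if t ≤ T1 then g1 t else g2 (t - T1))
      (if t + 1 ≤ T1 then g1 (t + 1) else g2 (t + 1 - T1))
    split_ifs with h1 h2 h3
    · exact hg1s t (by omega)
    · have ht1 : t = T1 := by omega
      subst ht1
      rw [hg1T, ← hg20]
      have he : t + 1 - t = 0 + 1 := by omega
      rw [he]
      exact hg2s 0 (by omega)
    · exact absurd h3 (by omega)
    · have he : t + 1 - T1 = (t - T1) + 1 := by omega
      rw [he]
      exact hg2s (t - T1) (by omega)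

lemma Reach.single {m n : ℕ} {C : Finset (ℕ × ℕ)} (hn : 1 ≤ n) (hm : n ≤ m)
    (hC : C ∈ configs m n) : Reach m n C (step C) := by
  obtain ⟨hmem, hsucc⟩ := step_spec hn hm hC
  refine ⟨1, fun t => if t = 0 then C else step C, by simp, by simp, ?_, ?_⟩
  · intro t ht
    by_cases h : t = 0 <;> simp [h, hC, hmem]
  · intro t ht
    have : t = 0 := by omega
    subst this
    simpa using hsucc


def transp (C : Finset (ℕ × ℕ)) : Finset (ℕ × ℕ) := C.image Prod.swap

lemma mem_transp {C : Finset (ℕ × ℕ)} {p : ℕ × ℕ} : p ∈ transp C ↔ p.swap ∈ C := by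
  simp only [transp, Finset.mem_image]
  constructor
  · rintro ⟨q, hq, rfl⟩
    simpa using hq
  · intro h
    exact ⟨p.swap, h, Prod.swap_swap p⟩

lemma transp_transp (C : Finset (ℕ × ℕ)) : transp (transp C) = C := by
  ext p
  rw [mem_transp, mem_transp, Prod.swap_swap]

lemma transp_configs {m n : ℕ} {C : Finset (ℕ × ℕ)} (hC : C ∈ configs m n) :
    transp C ∈ configs m n := by
  obtain ⟨hb, hcard, hcol, hrow⟩ := mem_configs.1 hC
  refine mem_configs.2 ⟨?_, ?_, ?_, ?_⟩
  · intro p hp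
    have := hb p.swap (mem_transp.1 hp)
    simp only [Prod.fst_swap, Prod.snd_swap] at this
    omega
  · rw [transp, Finset.card_image_of_injective _ Prod.swap_injective, hcard]
  · intro p hp q hq h
    have := hrow p.swap (mem_transp.1 hp) q.swap (mem_transp.1 hq) h
    exact Prod.swap_injective this
  · intro p hp q hq h
    have := hcol p.swap (mem_transp.1 hp) q.swap (mem_transp.1 hq) h
    exact Prod.swap_injective this

lemma transp_ground (n : ℕ) : transp (groundState n) = groundState n := by
  ext ⟨a, b⟩
  rw [mem_transp]
  simp only [groundState, Finset.mem_image, Finset.mem_range, Prod.swap_prod_mk,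
    Prod.mk.injEq]
  constructor
  · rintro ⟨k, hk, h1, h2⟩
    exact ⟨n - 1 - k, by omega, by omega, by omega⟩
  · rintro ⟨k, hk, h1, h2⟩
    exact ⟨n - 1 - k, by omega, by omega, by omega⟩

lemma transp_succ {m n : ℕ} {C C' : Finset (ℕ × ℕ)} (hC : C ∈ configs m n)
    (h : succRel m C C') : succRel m (transp C') (transp C) := by
  obtain ⟨hb, hcard, hcol, hrow⟩ := mem_configs.1 hC
  rcases h with ⟨h0, hC'⟩ | ⟨c₀, hc₀, ρ, hρ, hfresh, hC'⟩
  · have hpos : ∀ q ∈ C, 1 ≤ q.2 := by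
      intro q hq
      by_contra hq2
      exact h0 ⟨q, hq, by omega⟩
    have h1 : transp C' = C.image (fun q : ℕ × ℕ => (q.2 - 1, q.1 + 1)) := by
      rw [hC', transp, Finset.image_image]
      rfl
    refine Or.inl ⟨?_, ?_⟩
    · rintro ⟨p, hp, hp2⟩
      rw [h1] at hp
      obtain ⟨q, hq, rfl⟩ := Finset.mem_image.1 hp
      simp only at hp2
      omega
    · rw [h1, Finset.image_image, transp]
      refine (Finset.image_congr ?_).symm
      intro q hq
      have hq' : q ∈ C := hq
      have := hpos q hq'
      simp only [Function.comp_apply, Prod.swap_prod_mk]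
      have he1 : q.2 - 1 + 1 = q.2 := by omega
      have he2 : q.1 + 1 - 1 = q.1 := by omega
      rw [he1, he2]
      rfl
  · obtain ⟨hCd, hni⟩ := row0_decomp hrow hc₀
    have h1 : transp C' = insert (ρ, 0)
        ((C.filter (fun p : ℕ × ℕ => 1 ≤ p.2)).image (fun q : ℕ × ℕ => (q.2 - 1, q.1 + 1))) := by
      rw [hC', transp, Finset.image_insert, Finset.image_image]
      rfl
    have h2 : (transp C').filter (fun p : ℕ × ℕ => 1 ≤ p.2)
        = (C.filter (fun p : ℕ × ℕ => 1 ≤ p.2)).image (fun q : ℕ × ℕ => (q.2 - 1, q.1 + 1)) := by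
      rw [h1, Finset.filter_insert, if_neg (by simp)]
      refine Finset.filter_true_of_mem ?_
      intro p hp
      obtain ⟨q, hq, rfl⟩ := Finset.mem_image.1 hp
      simp only
      omega
    refine Or.inr ⟨ρ, ?_, c₀, ?_, ?_, ?_⟩
    · rw [h1]
      exact Finset.mem_insert_self _ _
    · have := hb (c₀, 0) hc₀
      simp at this
      omega
    · rw [h2, Finset.image_image]
      intro h
      obtain ⟨q, hq, he⟩ := Finset.mem_image.1 h
      simp only [Function.comp_apply] at he
      obtain ⟨hqC, hq2⟩ := Finset.mem_filter.1 hq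
      have hqe : q = (c₀, 0) := hcol q hqC (c₀, 0) hc₀ (by show q.1 = c₀; omega)
      rw [hqe] at hq2
      simp at hq2
    · have h3 : transp C = insert (0, c₀)
          ((C.filter (fun p : ℕ × ℕ => 1 ≤ p.2)).image Prod.swap) := by
        conv_lhs => rw [hCd]
        rw [transp, Finset.image_insert]
        rfl
      rw [h3, h2, Finset.image_image]
      congr 1
      refine (Finset.image_congr ?_).symm
      intro q hq
      have hq' : q ∈ C.filter (fun p : ℕ × ℕ => 1 ≤ p.2) := hq
      have := (Finset.mem_filter.1 hq').2
      simp only [Function.comp_apply, Prod.swap_prod_mk]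
      have he1 : q.2 - 1 + 1 = q.2 := by omega
      have he2 : q.1 + 1 - 1 = q.1 := by omega
      rw [he1, he2]
      rfl

lemma Reach.rev {m n : ℕ} {A B : Finset (ℕ × ℕ)} (h : Reach m n A B) :
    Reach m n (transp B) (transp A) := by
  obtain ⟨T, g, hg0, hgT, hgc, hgs⟩ := h
  refine ⟨T, fun t => transp (g (T - t)), by simp [hgT], by simp [hg0], ?_, ?_⟩
  · intro t ht
    exact transp_configs (hgc (T - t) (by omega))
  · intro t ht
    have h1 : T - t = (T - (t + 1)) + 1 := by omega
    have h2 := transp_succ (hgc (T - (t + 1)) (by omega)) (hgs (T - (t + 1)) (by omega))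
    show succRel m (transp (g (T - t))) (transp (g (T - (t + 1))))
    rw [h1]
    exact h2


lemma reach_rows {m n : ℕ} (hn : 1 ≤ n) (hm : n ≤ m) :
    ∀ N : ℕ, ∀ C ∈ configs m n, meas C ≤ N →
      ∃ C', Reach m n C C' ∧ C' ∈ configs m n ∧ rowsOf C' = Finset.range n := by
  intro N
  induction N with
  | zero =>
    intro C hC hle
    by_cases h : rowsOf C = Finset.range n
    · exact ⟨C, Reach.refl hC, hC, h⟩
    · have := meas_step_lt hn hm hC h
      omega
  | succ N ih =>
    intro C hC hle
    by_cases h : rowsOf C = Finset.range n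
    · exact ⟨C, Reach.refl hC, hC, h⟩
    · have hlt := meas_step_lt hn hm hC h
      obtain ⟨C', hR, hC', hr⟩ := ih (step C) (step_spec hn hm hC).1 (by omega)
      exact ⟨C', (Reach.single hn hm hC).trans hR, hC', hr⟩

lemma ground_card (n : ℕ) : (groundState n).card = n := by
  rw [groundState, Finset.card_image_of_injOn, Finset.card_range]
  intro a _ b _ h
  simpa using congrArg Prod.fst h

lemma ground_configs {m n : ℕ} (hn : 1 ≤ n) (hm : n ≤ m) : groundState n ∈ configs m n := by
  refine mem_configs.2 ⟨?_, ground_card n, ?_, ?_⟩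
  · intro p hp
    obtain ⟨k, hk, rfl⟩ := Finset.mem_image.1 hp
    rw [Finset.mem_range] at hk
    simp only
    omega
  · intro p hp p' hp' h
    obtain ⟨k, hk, rfl⟩ := Finset.mem_image.1 hp
    obtain ⟨k', hk', rfl⟩ := Finset.mem_image.1 hp'
    rw [Finset.mem_range] at hk hk'
    simp only at h
    simp only [Prod.mk.injEq]
    omega
  · intro p hp p' hp' h
    obtain ⟨k, hk, rfl⟩ := Finset.mem_image.1 hp
    obtain ⟨k', hk', rfl⟩ := Finset.mem_image.1 hp'
    rw [Finset.mem_range] at hk hk'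
    simp only at h
    simp only [Prod.mk.injEq]
    omega

lemma reach_ground {m n : ℕ} (hn : 1 ≤ n) (hm : n ≤ m) {C : Finset (ℕ × ℕ)}
    (hC : C ∈ configs m n) : Reach m n C (groundState n) := by
  obtain ⟨C1, hR1, hC1, hr1⟩ := reach_rows hn hm (meas C) C hC le_rfl
  have key : ∀ k : ℕ, ∃ C2, Reach m n C1 C2 ∧ C2 ∈ configs m n ∧
      rowsOf C2 = Finset.range n ∧ ∀ p ∈ C2, n - k ≤ p.2 → p.1 = n - 1 - p.2 := by
    intro k
    induction k with
    | zero =>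
      refine ⟨C1, Reach.refl hC1, hC1, hr1, fun p hp hge => ?_⟩
      have : p.2 ∈ rowsOf C1 := mem_rowsOf.2 ⟨p, hp, rfl⟩
      rw [hr1, Finset.mem_range] at this
      omega
    | succ k ih =>
      obtain ⟨C2, hR, hC2, hr2, hd⟩ := ih
      exact ⟨step C2, hR.trans (Reach.single hn hm hC2), (step_spec hn hm hC2).1,
        rowsOf_step hn hC2 hr2, step_diag hn hC2 hr2 hd⟩
  obtain ⟨C2, hR, hC2, hr2, hd⟩ := key n
  have hsub : C2 ⊆ groundState n := by
    intro p hp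
    have hplt : p.2 < n := by
      have : p.2 ∈ rowsOf C2 := mem_rowsOf.2 ⟨p, hp, rfl⟩
      rwa [hr2, Finset.mem_range] at this
    have h1 : p.1 = n - 1 - p.2 := hd p hp (by omega)
    refine Finset.mem_image.2 ⟨n - 1 - p.2, Finset.mem_range.2 (by omega), ?_⟩
    have h2 : n - 1 - (n - 1 - p.2) = p.2 := by omega
    rw [h2, ← h1]
  have heq : C2 = groundState n := by
    refine Finset.eq_of_subset_of_card_le hsub ?_
    rw [ground_card, (mem_configs.1 hC2).2.1]
  rw [heq] at hR
  exact hR1.trans hR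

lemma ground_succ {m n : ℕ} (hn : 1 ≤ n) (hm : n ≤ m) :
    succRel m (groundState n) (groundState n) := by
  refine Or.inr ⟨n - 1, ?_, n - 1, by omega, ?_, ?_⟩
  · refine Finset.mem_image.2 ⟨n - 1, Finset.mem_range.2 (by omega), ?_⟩
    simp
  · intro h
    obtain ⟨p, hp, he⟩ := Finset.mem_image.1 h
    obtain ⟨hpg, h1⟩ := Finset.mem_filter.1 hp
    obtain ⟨k, hk, rfl⟩ := Finset.mem_image.1 hpg
    rw [Finset.mem_range] at hk
    simp only at h1 he
    omega
  · ext p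
    constructor
    · intro hp
      obtain ⟨k, hk, rfl⟩ := Finset.mem_image.1 hp
      rw [Finset.mem_range] at hk
      rcases Nat.eq_zero_or_pos k with rfl | hk1
      · exact Finset.mem_insert.2 (Or.inl (by simp))
      · refine Finset.mem_insert.2 (Or.inr (Finset.mem_image.2
          ⟨(k - 1, n - 1 - (k - 1)), ?_, ?_⟩))
        · refine Finset.mem_filter.2 ⟨Finset.mem_image.2
            ⟨k - 1, Finset.mem_range.2 (by omega), rfl⟩, ?_⟩
          simp only
          omega
        · simp only [Prod.mk.injEq]
          constructor <;> omega
    · intro hp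
      rcases Finset.mem_insert.1 hp with rfl | hp'
      · exact Finset.mem_image.2 ⟨0, Finset.mem_range.2 (by omega), by simp⟩
      · obtain ⟨q, hq, rfl⟩ := Finset.mem_image.1 hp'
        obtain ⟨hqg, h1⟩ := Finset.mem_filter.1 hq
        obtain ⟨k, hk, rfl⟩ := Finset.mem_image.1 hqg
        rw [Finset.mem_range] at hk
        have h1' : 1 ≤ n - 1 - k := h1
        refine Finset.mem_image.2 ⟨k + 1, Finset.mem_range.2 (by omega), ?_⟩
        show ((k : ℕ) + 1, n - 1 - (k + 1)) = (k + 1, n - 1 - k - 1)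
        have he : n - 1 - (k + 1) = n - 1 - k - 1 := by omega
        rw [he]

end ExtJug

/-- The extended juggling dynamics on `C_n(S_{m+1})` is irreducible and aperiodic:
(a) any configuration can be reached from any other by a finite path of successor steps
staying in `C_n(S_{m+1})`, and (b) the extended ground state is a successor of itself. -/
theorem extended_irreducible_aperiodic (m n : ℕ) (hn : 1 ≤ n) (hm : n ≤ m) :
    (∀ C ∈ configs m n, ∀ C' ∈ configs m n,
      ∃ (T : ℕ) (g : ℕ → Finset (ℕ × ℕ)), g 0 = C ∧ g T = C' ∧
        (∀ t ≤ T, g t ∈ configs m n) ∧ ∀ t < T, succRel m (g t) (g (t + 1))) ∧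
      (groundState n ∈ configs m n ∧ succRel m (groundState n) (groundState n)) := by
  constructor
  · intro C hC C' hC'
    have h1 : ExtJug.Reach m n C (groundState n) := ExtJug.reach_ground hn hm hC
    have h3 := (ExtJug.reach_ground hn hm (ExtJug.transp_configs hC')).rev
    rw [ExtJug.transp_ground, ExtJug.transp_transp] at h3
    exact h1.trans h3
  · exact ⟨ExtJug.ground_configs hn hm, ExtJug.ground_succ hn hm⟩
end
end

section
/- Let m and n be integers with 1 ≤ n ≤ m, let q ∈ (0,1), set ℓ = m−n+1, and let C ∈ C_n(S_{m+1}). (a) If C contains no rook in column 0, then q^{−circ(C)} = q^{−circ(Ĉ)}, where Ĉ = {(c−1, r+1) : (c,r) ∈ C} (the unique predecessor of C under waiting). (b) If C contains a rook (0, ρ) in column 0, then q^{−circ(C)} = Σ_{c*} q^{−circ(C*(c*))} · ((1−q)/(1−q^ℓ)) · q^{ρ − s}, where s = |{(c,r) ∈ C : r < ρ}|, the sum ranges over all c* ∈ {0,...,m−1} with c* ∉ {c−1 : (c,r) ∈ C ∖ {(0,ρ)}}, and C*(c*) = {(c−1, r+1) : (c,r) ∈ C ∖ {(0,ρ)}}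 ∪ {(c*, 0)} are the predecessors of C under a throw. (Hence the measure proportional to q^{−circ(C)} solves the stationarity equation of the extended bounded geometric juggling process, in which the rook thrown from the bottom row lands in column 0 at the (ξ+1)-th vacant row counted from the bottom, with ξ distributed as an ℓ-truncated geometric distribution with parameter q.) -/
noncomputable section

/-- The statistic `circ(C)` on the board `S_{m+1}`. -/
def circ (m : ℕ) (C : Finset (ℕ × ℕ)) : ℕ :=
  ((board m).filter (fun p =>
    (∃ p₀ ∈ C, p₀.2 = p.2 ∧ p₀.1 < p.1) ∧ ¬∃ p₀ ∈ C, p₀.1 = p.1 ∧ p.2 < p₀.2)).card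

/-!
Write `circ C` as a sum over the rooks `p` of the number of cells it counts in the row of `p`.
The diagonal move `(c, r) ↦ (c - 1, r + 1)` preserves every summand, which gives (a) and, in (b),
replaces `C.erase (0, ρ)` by its shift `E`. Adding a rook `a` that has no rook strictly below-left
of it raises `circ` by `m - 1 - a.1 - a.2` minus the number of rooks strictly above-right of `a`.
For `a = (0, ρ)` this increment is `m - n - ρ + s`; for a thrown rook `(c*, 0)` added to `E` it is
`m - n - j`, where `j` is the rank of `c*` among the `ℓ` free columns. So the sum over `c*` is
`q ^ (n - m - circ E) * ∑ j < ℓ, q ^ j`, and the geometric sum cancels `(1 - q) / (1 - q ^ ℓ)`.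
-/

open Finset

section Rank

variable {α : Type*} [LinearOrder α]

theorem strictMonoOn_card_filter_lt (s : Finset α) :
    StrictMonoOn (fun x => #(s.filter (· < x))) s := by
  intro a _ b hb hab
  refine card_lt_card ((ssubset_iff_of_subset ?_).mpr ⟨a, ?_, ?_⟩)
  · exact monotone_filter_right s fun _ _ h => h.trans hab
  · exact mem_filter.mpr ⟨‹a ∈ s›, hab⟩
  · simp

theorem sum_comp_card_filter_lt {M : Type*} [AddCommMonoid M] (s : Finset α) (f : ℕ → M) :
    ∑ x ∈ s, f #(s.filter (· < x)) = ∑ j ∈ range #s, f j := by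
  have hinj := (strictMonoOn_card_filter_lt s).injOn
  rw [← sum_image (f := f) hinj]
  congr 1
  refine eq_of_subset_of_card_le (fun j hj => ?_) (by rw [card_image_of_injOn hinj, card_range])
  obtain ⟨x, hx, rfl⟩ := mem_image.mp hj
  exact mem_range.mpr (card_lt_card (filter_ssubset.mpr ⟨x, hx, lt_irrefl x⟩))

end Rank

theorem add_card_filter_lt_eq_card_add {I : Finset ℕ} {m c : ℕ}
    (hc : c ∈ (range m).filter (fun x => x ∉ I)) :
    c + #(I.filter (c < ·)) = #I + #(((range m).filter (fun x => x ∉ I)).filter (· < c)) := by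
  obtain ⟨hcm, hcI⟩ := mem_filter.mp hc
  have hbelow := card_filter_add_card_filter_not (s := range c) (p := (· ∈ I))
  have hI := card_filter_add_card_filter_not (s := I) (p := (· < c))
  rw [card_range] at hbelow
  have hin : (range c).filter (· ∈ I) = I.filter (· < c) := by
    ext x; simp only [mem_filter, mem_range]; tauto
  have hout : (range c).filter (· ∉ I) = ((range m).filter (fun x => x ∉ I)).filter (· < c) := by
    ext x
    simp only [mem_filter, mem_range]
    exact ⟨fun ⟨h, h'⟩ => ⟨⟨h.trans (mem_range.mp hcm), h'⟩, h⟩, fun ⟨⟨_, h'⟩, h⟩ => ⟨h, h'⟩⟩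
  have habove : I.filter (¬ · < c) = I.filter (c < ·) :=
    filter_congr fun x hx => by have : x ≠ c := fun h => hcI (h ▸ hx); omega
  rw [hin, hout] at hbelow
  rw [habove] at hI
  omega

theorem zpow_neg_natCast_eq_pow_div {K : Type*} [DivisionRing K] {q : K} (hq : q ≠ 0)
    {a b N : ℕ} (h : a + b = N) : q ^ (-(a : ℤ)) = q ^ b / q ^ N := by
  rw [← h, pow_add, zpow_neg, zpow_natCast, div_mul_cancel_right₀ (pow_ne_zero b hq)]

theorem zpow_neg_eq_sum_mul_geom {q : ℝ} (hq : q ∈ Set.Ioo (0 : ℝ) 1) {F : Finset ℕ}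
    (hF : F.Nonempty) {w : ℕ → ℕ} {Y N k e : ℕ}
    (hw : ∀ c ∈ F, w c + #(F.filter (· < c)) + k = N) (hY : Y + (k + e) = N) :
    q ^ (-(Y : ℤ)) = ∑ c ∈ F, q ^ (-(w c : ℤ)) * ((1 - q) / (1 - q ^ #F)) * q ^ e := by
  have hq0 : q ≠ 0 := hq.1.ne'
  have hgeom : (∑ j ∈ range #F, q ^ j) * ((1 - q) / (1 - q ^ #F)) = 1 := by
    have : q ^ #F < 1 := pow_lt_one₀ hq.1.le hq.2 (card_pos.mpr hF).ne'
    rw [← mul_div_assoc, geom_sum_mul_neg, div_self (by linarith)]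
  have hterm : ∀ c ∈ F, q ^ (-(w c : ℤ)) = q ^ #(F.filter (· < c)) * (q ^ k / q ^ N) :=
    fun c hc => by
      rw [zpow_neg_natCast_eq_pow_div hq0 ((add_assoc ..).symm.trans (hw c hc)), pow_add,
        mul_div_assoc]
  rw [← sum_mul, ← sum_mul, sum_congr rfl hterm, ← sum_mul,
    sum_comp_card_filter_lt F (q ^ ·), zpow_neg_natCast_eq_pow_div hq0 hY]
  calc q ^ (k + e) / q ^ N
      = ((∑ j ∈ range #F, q ^ j) * ((1 - q) / (1 - q ^ #F))) * (q ^ (k + e) / q ^ N) := by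
        rw [hgeom, one_mul]
    _ = _ := by ring

section Configurations

variable {m n : ℕ}

theorem mem_board {p : ℕ × ℕ} : p ∈ board m ↔ p.1 + p.2 < m := by
  simp only [board, mem_filter, mem_product, mem_range]; omega

theorem mem_configs {C : Finset (ℕ × ℕ)} :
    C ∈ configs m n ↔ C ⊆ board m ∧ #C = n ∧
      Set.InjOn Prod.fst (C : Set (ℕ × ℕ)) ∧ Set.InjOn Prod.snd (C : Set (ℕ × ℕ)) := by
  simp only [configs, mem_filter, mem_powersetCard, and_assoc]
  rfl

theorem erase_mem_configs {C : Finset (ℕ × ℕ)} {a : ℕ × ℕ} (hC : C ∈ configs m n) (ha : a ∈ C) :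
    C.erase a ∈ configs m (n - 1) := by
  obtain ⟨hCb, hCcard, hcol, hrow⟩ := mem_configs.mp hC
  have hsub : (C.erase a : Set (ℕ × ℕ)) ⊆ C := coe_subset.mpr (erase_subset a C)
  exact mem_configs.mpr ⟨(erase_subset a C).trans hCb, by rw [card_erase_of_mem ha, hCcard],
    hcol.mono hsub, hrow.mono hsub⟩

def diagShift (p : ℕ × ℕ) : ℕ × ℕ := (p.1 - 1, p.2 + 1)

theorem image_diagShift (D : Finset (ℕ × ℕ)) :
    D.image (fun p => (p.1 - 1, p.2 + 1)) = D.image diagShift := rfl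

theorem image_fst_image_diagShift (D : Finset (ℕ × ℕ)) :
    (D.image diagShift).image Prod.fst = D.image (fun p => p.1 - 1) := by
  rw [image_image]; rfl

theorem injOn_diagShift : Set.InjOn diagShift {p : ℕ × ℕ | 1 ≤ p.1} := by
  rintro ⟨a, b⟩ (ha : 1 ≤ a) ⟨c, d⟩ (hc : 1 ≤ c) h
  simp only [diagShift, Prod.mk.injEq] at h
  ext <;> omega

theorem diagShift_image_mem_configs {C : Finset (ℕ × ℕ)} (hC : C ∈ configs m n)
    (h1 : ∀ p ∈ C, 1 ≤ p.1) : C.image diagShift ∈ configs m n := by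
  obtain ⟨hCb, hCcard, hcol, hrow⟩ := mem_configs.mp hC
  have hinj : Set.InjOn diagShift (C : Set (ℕ × ℕ)) := injOn_diagShift.mono h1
  refine mem_configs.mpr ⟨fun p hp => ?_, by rw [card_image_of_injOn hinj, hCcard], ?_, ?_⟩
  · obtain ⟨p, hpC, rfl⟩ := mem_image.mp hp
    have := mem_board.mp (hCb hpC)
    have := h1 p hpC
    exact mem_board.mpr (by simp only [diagShift]; omega)
  · rw [coe_image]
    refine Set.InjOn.image_of_comp fun a ha b hb h => hcol ha hb ?_
    have := h1 a ha
    have := h1 b hb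
    simp only [Function.comp, diagShift] at h
    omega
  · rw [coe_image]
    exact Set.InjOn.image_of_comp fun a ha b hb h => hrow ha hb (by simpa [diagShift] using h)

/-- The columns `x` of the cells `(x, p.2)` that `circ` counts because of the rook `p`. -/
def circColumns (m : ℕ) (D : Finset (ℕ × ℕ)) (p : ℕ × ℕ) : Finset ℕ :=
  (Ioo p.1 (m - p.2)).filter (fun x => ¬∃ p₀ ∈ D, p₀.1 = x ∧ p.2 < p₀.2)

theorem circ_eq_sum_card_circColumns {D : Finset (ℕ × ℕ)}
    (hrow : Set.InjOn Prod.snd (D : Set (ℕ × ℕ))) :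
    circ m D = ∑ p ∈ D, #(circColumns m D p) := by
  have hcells : (board m).filter (fun p =>
      (∃ p₀ ∈ D, p₀.2 = p.2 ∧ p₀.1 < p.1) ∧ ¬∃ p₀ ∈ D, p₀.1 = p.1 ∧ p.2 < p₀.2)
      = D.biUnion (fun p => (circColumns m D p).image (·, p.2)) := by
    ext ⟨x, r⟩
    simp only [mem_filter, mem_biUnion, mem_image, circColumns, mem_Ioo, mem_board,
      Prod.mk.injEq]
    constructor
    · rintro ⟨hb, ⟨p₀, hp₀, rfl, hpx⟩, hnb⟩
      exact ⟨p₀, hp₀, x, ⟨⟨hpx, by omega⟩, hnb⟩, rfl, rfl⟩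
    · rintro ⟨p, hp, _, ⟨⟨h1, h2⟩, h3⟩, rfl, rfl⟩
      exact ⟨by omega, ⟨p, hp, rfl, h1⟩, h3⟩
  rw [circ, hcells, card_biUnion]
  · exact sum_congr rfl fun p _ => card_image_of_injective _ fun a b h => (Prod.mk.inj h).1
  · intro p hp p' hp' hne
    refine disjoint_left.mpr fun x hx hx' => hne (hrow hp hp' ?_)
    obtain ⟨_, _, rfl⟩ := mem_image.mp hx
    obtain ⟨_, _, h⟩ := mem_image.mp hx'
    exact (Prod.mk.inj h).2.symm

theorem circColumns_insert {D : Finset (ℕ × ℕ)} {a p : ℕ × ℕ} (h : ¬(p.1 < a.1 ∧ p.2 < a.2)) :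
    circColumns m (insert a D) p = circColumns m D p := by
  refine filter_congr fun x hx =>
    not_congr ⟨?_, fun ⟨p₀, hp₀, hx⟩ => ⟨p₀, mem_insert_of_mem hp₀, hx⟩⟩
  rintro ⟨p₀, hp₀, hx'⟩
  rcases mem_insert.mp hp₀ with rfl | hp₀
  · exact absurd ⟨hx'.1 ▸ (mem_Ioo.mp hx).1, hx'.2⟩ h
  · exact ⟨p₀, hp₀, hx'⟩

theorem card_circColumns_add {D : Finset (ℕ × ℕ)} {a : ℕ × ℕ} (ha : a.1 + a.2 < m)
    (hD : D ⊆ board m) (hcol : Set.InjOn Prod.fst (D : Set (ℕ × ℕ))) :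
    #(circColumns m D a) + #(D.filter (fun p => a.1 < p.1 ∧ a.2 < p.2)) + a.1 + a.2 + 1 = m := by
  have hsplit := card_filter_add_card_filter_not (s := Ioo a.1 (m - a.2))
    (p := fun x => ∃ p₀ ∈ D, p₀.1 = x ∧ a.2 < p₀.2)
  have hblocked : (Ioo a.1 (m - a.2)).filter (fun x => ∃ p₀ ∈ D, p₀.1 = x ∧ a.2 < p₀.2)
      = (D.filter (fun p => a.1 < p.1 ∧ a.2 < p.2)).image Prod.fst := by
    ext x
    simp only [mem_filter, mem_image, mem_Ioo]
    constructor
    · rintro ⟨⟨hx, _⟩, p₀, hp₀, rfl, hr⟩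
      exact ⟨p₀, ⟨hp₀, hx, hr⟩, rfl⟩
    · rintro ⟨p₀, ⟨hp₀, hc, hr⟩, rfl⟩
      have := mem_board.mp (hD hp₀)
      exact ⟨⟨hc, by omega⟩, p₀, hp₀, rfl, hr⟩
  rw [hblocked, card_image_of_injOn (hcol.mono (coe_subset.mpr (filter_subset _ _))),
    Nat.card_Ioo] at hsplit
  rw [circColumns]
  omega

theorem circ_insert_add {D : Finset (ℕ × ℕ)} {a : ℕ × ℕ} (ha : a ∉ D) (hab : a.1 + a.2 < m)
    (hD : D ⊆ board m) (hcol : Set.InjOn Prod.fst (D : Set (ℕ × ℕ)))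
    (hrow : Set.InjOn Prod.snd (insert a D : Set (ℕ × ℕ)))
    (hbelow : ∀ p ∈ D, ¬(p.1 < a.1 ∧ p.2 < a.2)) :
    circ m (insert a D) + #(D.filter (fun p => a.1 < p.1 ∧ a.2 < p.2)) + a.1 + a.2 + 1
      = m + circ m D := by
  rw [← coe_insert] at hrow
  rw [circ_eq_sum_card_circColumns hrow, sum_insert ha, circColumns_insert (lt_irrefl _ ·.1),
    sum_congr rfl fun p hp => congrArg card (circColumns_insert (hbelow p hp)),
    ← circ_eq_sum_card_circColumns (hrow.mono (coe_subset.mpr (subset_insert a D)))]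
  have := card_circColumns_add hab hD hcol
  omega

theorem card_circColumns_diagShift {D : Finset (ℕ × ℕ)} (h1 : ∀ p ∈ D, 1 ≤ p.1) {p : ℕ × ℕ}
    (hp : p ∈ D) :
    #(circColumns m (D.image diagShift) (diagShift p)) = #(circColumns m D p) := by
  have hp1 := h1 p hp
  refine card_bij' (fun y _ => y + 1) (fun x _ => x - 1) (fun y hy => ?_) (fun x hx => ?_)
    (fun y _ => Nat.add_sub_cancel y 1) (fun x hx => ?_)
  · simp only [circColumns, mem_filter, mem_Ioo, mem_image] at hy ⊢
    simp only [diagShift] at hy ⊢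
    refine ⟨by omega, fun ⟨p₀, hp₀, hx, hr⟩ => hy.2 ⟨diagShift p₀, ⟨p₀, hp₀, rfl⟩, ?_, ?_⟩⟩ <;>
      simp only [diagShift] <;> omega
  · simp only [circColumns, mem_filter, mem_Ioo, mem_image] at hx ⊢
    simp only [diagShift] at hx ⊢
    refine ⟨by omega, ?_⟩
    rintro ⟨_, ⟨p₀, hp₀, rfl⟩, hx', hr⟩
    have := h1 p₀ hp₀
    exact hx.2 ⟨p₀, hp₀, by omega, by omega⟩
  · simp only [circColumns, mem_filter, mem_Ioo] at hx
    omega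

theorem circ_image_diagShift {D : Finset (ℕ × ℕ)}
    (hrow : Set.InjOn Prod.snd (D : Set (ℕ × ℕ))) (h1 : ∀ p ∈ D, 1 ≤ p.1) :
    circ m (D.image diagShift) = circ m D := by
  have hinj : Set.InjOn diagShift (D : Set (ℕ × ℕ)) := injOn_diagShift.mono h1
  have hrow' : Set.InjOn Prod.snd (D.image diagShift : Set (ℕ × ℕ)) := by
    rw [coe_image]
    exact Set.InjOn.image_of_comp fun a ha b hb h => hrow ha hb (by simpa [diagShift] using h)
  rw [circ_eq_sum_card_circColumns hrow', circ_eq_sum_card_circColumns hrow, sum_image hinj]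
  exact sum_congr rfl fun p hp => card_circColumns_diagShift h1 hp

theorem card_filter_snd_lt_le {D : Finset (ℕ × ℕ)}
    (hrow : Set.InjOn Prod.snd (D : Set (ℕ × ℕ))) (r : ℕ) :
    #(D.filter (fun p => p.2 < r)) ≤ r := by
  simpa using card_le_card_of_injOn Prod.snd (t := range r)
    (fun p hp => mem_range.mpr (mem_filter.mp hp).2)
    (hrow.mono (coe_subset.mpr (filter_subset _ _)))

theorem card_filter_snd_lt_add_card_filter_lt_snd {C : Finset (ℕ × ℕ)}
    (hrow : Set.InjOn Prod.snd (C : Set (ℕ × ℕ))) {a : ℕ × ℕ} (ha : a ∈ C) :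
    #(C.filter (fun p => p.2 < a.2)) + #(C.filter (fun p => a.2 < p.2)) + 1 = #C := by
  have hsplit := card_filter_add_card_filter_not (s := C) (p := fun p => p.2 < a.2)
  have habove : C.filter (fun p => ¬p.2 < a.2) = insert a (C.filter (fun p => a.2 < p.2)) := by
    ext p
    simp only [mem_filter, mem_insert]
    constructor
    · rintro ⟨hp, hr⟩
      by_cases h : p.2 = a.2
      · exact .inl (hrow hp ha h)
      · exact .inr ⟨hp, by omega⟩
    · rintro (rfl | ⟨hp, hr⟩)
      · exact ⟨ha, lt_irrefl _⟩
      · exact ⟨hp, by omega⟩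
  have hnot : a ∉ C.filter (fun p => a.2 < p.2) := fun h => lt_irrefl _ (mem_filter.mp h).2
  rw [habove, card_insert_of_notMem hnot] at hsplit
  omega

theorem circ_add_of_mem_col_zero {C : Finset (ℕ × ℕ)} (hC : C ⊆ board m)
    (hcol : Set.InjOn Prod.fst (C : Set (ℕ × ℕ))) (hrow : Set.InjOn Prod.snd (C : Set (ℕ × ℕ)))
    {ρ : ℕ} (hρ : (0, ρ) ∈ C) :
    circ m C + ρ + #C = m + circ m (C.erase (0, ρ)) + #(C.filter (fun p => p.2 < ρ)) := by
  have hsub : ((C.erase (0, ρ) : Finset _) : Set (ℕ × ℕ)) ⊆ C := coe_subset.mpr (erase_subset _ _)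
  have key := circ_insert_add (notMem_erase (0, ρ) C) (mem_board.mp (hC hρ))
    ((erase_subset _ _).trans hC) (hcol.mono hsub) (by rwa [← coe_insert, insert_erase hρ])
    (fun p _ h => Nat.not_lt_zero _ h.1)
  have habove : (C.erase (0, ρ)).filter (fun p => 0 < p.1 ∧ ρ < p.2)
      = C.filter (fun p => ρ < p.2) := by
    ext p
    simp only [mem_filter, mem_erase]
    constructor
    · rintro ⟨⟨_, hp⟩, _, hr⟩
      exact ⟨hp, hr⟩
    · rintro ⟨hp, hr⟩
      have hp0 : p ≠ (0, ρ) := by rintro rfl; exact lt_irrefl ρ hr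
      exact ⟨⟨hp0, hp⟩, Nat.pos_of_ne_zero fun h => hp0 (hcol hp hρ h), hr⟩
  rw [insert_erase hρ, habove] at key
  have := card_filter_snd_lt_add_card_filter_lt_snd hrow hρ
  dsimp only at this
  omega

theorem circ_insert_bottom_add {E : Finset (ℕ × ℕ)} (hE : E ⊆ board m)
    (hcol : Set.InjOn Prod.fst (E : Set (ℕ × ℕ))) (hrow : Set.InjOn Prod.snd (E : Set (ℕ × ℕ)))
    (hE1 : ∀ p ∈ E, 1 ≤ p.2) {c : ℕ}
    (hc : c ∈ (range m).filter (fun x => x ∉ E.image Prod.fst)) :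
    circ m (insert (c, 0) E)
      + #(((range m).filter (fun x => x ∉ E.image Prod.fst)).filter (· < c)) + (#E + 1)
      = m + circ m E := by
  have hnot : (c, 0) ∉ E := fun h => by simpa using hE1 _ h
  have hrow' : Set.InjOn Prod.snd (insert (c, 0) E : Set (ℕ × ℕ)) :=
    (Set.injOn_insert hnot).mpr ⟨hrow, fun ⟨p, hp, h⟩ => by simpa [h] using hE1 p hp⟩
  have key := circ_insert_add hnot (by simpa using (mem_filter.mp hc).1) hE hcol hrow'
    (fun p _ h => Nat.not_lt_zero _ h.2)
  have hright : E.filter (fun p => c < p.1 ∧ 0 < p.2) = E.filter (fun p => c < p.1) :=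
    filter_congr fun p hp => and_iff_left (hE1 p hp)
  have hcols : #(E.filter (fun p => c < p.1)) = #((E.image Prod.fst).filter (c < ·)) := by
    rw [filter_image, card_image_of_injOn (hcol.mono (coe_subset.mpr (filter_subset _ _)))]
  rw [hright, hcols] at key
  have := add_card_filter_lt_eq_card_add hc
  rw [card_image_of_injOn hcol] at this
  omega

theorem zpow_neg_circ_eq_sum_throw {C : Finset (ℕ × ℕ)} (hn : 1 ≤ n) (hm : n ≤ m)
    (hC : C ∈ configs m n) {q : ℝ} (hq : q ∈ Set.Ioo (0 : ℝ) 1) {ρ : ℕ} (hρ : (0, ρ) ∈ C) :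
    q ^ (-(circ m C : ℤ)) =
      ∑ c ∈ (range m).filter (fun x => x ∉ ((C.erase (0, ρ)).image diagShift).image Prod.fst),
        q ^ (-(circ m (insert (c, 0) ((C.erase (0, ρ)).image diagShift)) : ℤ)) *
          ((1 - q) / (1 - q ^ (m - n + 1))) * q ^ (ρ - #(C.filter (fun p => p.2 < ρ))) := by
  obtain ⟨hCb, hCcard, hcol, hrow⟩ := mem_configs.mp hC
  have hD1 : ∀ p ∈ C.erase (0, ρ), 1 ≤ p.1 := fun p hp =>
    Nat.pos_of_ne_zero fun h => (mem_erase.mp hp).1 (hcol (mem_erase.mp hp).2 hρ h)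
  have hD := erase_mem_configs hC hρ
  set E := (C.erase (0, ρ)).image diagShift
  obtain ⟨hEb, hEcard, hEcol, hErow⟩ := mem_configs.mp (diagShift_image_mem_configs hD hD1)
  have hE1 : ∀ p ∈ E, 1 ≤ p.2 := fun p hp => by
    obtain ⟨p, _, rfl⟩ := mem_image.mp hp
    exact Nat.le_add_left 1 p.2
  set F := (range m).filter (fun x => x ∉ E.image Prod.fst)
  have hF : #F = m - n + 1 := by
    have hcols : E.image Prod.fst ⊆ range m := fun x hx => by
      obtain ⟨p, hp, rfl⟩ := mem_image.mp hx
      exact mem_range.mpr (by have := mem_board.mp (hEb hp); omega)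
    rw [show F = range m \ E.image Prod.fst from (sdiff_eq_filter _ _).symm,
      card_sdiff_of_subset hcols, card_range, card_image_of_injOn hEcol, hEcard]
    omega
  have hC0 := circ_add_of_mem_col_zero hCb hcol hrow hρ
  rw [← circ_image_diagShift (mem_configs.mp hD).2.2.2 hD1] at hC0
  have hs := card_filter_snd_lt_le hrow ρ
  rw [← hF]
  refine zpow_neg_eq_sum_mul_geom hq (card_pos.mp (by omega))
    (fun c hc => circ_insert_bottom_add hEb hEcol hErow hE1 hc) ?_
  omega

end Configurations

/-- The measure proportional to `q^{-circ(C)}` solves the stationarity equation of the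
extended bounded geometric juggling process on `C_n(S_{m+1})` with `ℓ = m - n + 1`:
(a) if `C` has no rook in column `0`, then `q^{-circ(C)} = q^{-circ(Ĉ)}` where
`Ĉ = {(c-1, r+1) : (c,r) ∈ C}` is the unique predecessor of `C` under waiting;
(b) if `C` has a rook `(0, ρ)`, then with `s = |{(c,r) ∈ C : r < ρ}|`,
`q^{-circ(C)} = Σ_{c*} q^{-circ(C*(c*))} * ((1-q)/(1-q^ℓ)) * q^(ρ-s)`, where `c*` ranges
over `{0, ..., m-1} \ {c-1 : (c,r) ∈ C \ {(0,ρ)}}` and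
`C*(c*) = {(c-1, r+1) : (c,r) ∈ C \ {(0,ρ)}} ∪ {(c*, 0)}` are the predecessors of `C`
under a throw. -/
theorem circ_stationarity (m n : ℕ) (hn : 1 ≤ n) (hm : n ≤ m) (q : ℝ)
    (hq : q ∈ Set.Ioo (0 : ℝ) 1) (C : Finset (ℕ × ℕ)) (hC : C ∈ configs m n) :
    ((¬∃ p ∈ C, p.1 = 0) →
      q ^ (-(circ m C : ℤ)) =
        q ^ (-(circ m (C.image (fun p => (p.1 - 1, p.2 + 1))) : ℤ))) ∧
    (∀ ρ : ℕ, (0, ρ) ∈ C →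
      q ^ (-(circ m C : ℤ)) =
        ∑ c' ∈ (Finset.range m).filter
            (fun c' => c' ∉ (C.erase (0, ρ)).image (fun p => p.1 - 1)),
          q ^ (-(circ m (insert (c', 0)
              ((C.erase (0, ρ)).image (fun p => (p.1 - 1, p.2 + 1)))) : ℤ)) *
            ((1 - q) / (1 - q ^ (m - n + 1))) *
            q ^ (ρ - ((C.filter (fun p => p.2 < ρ)).card))) := by
  refine ⟨fun hno0 => ?_, fun ρ hρ => ?_⟩
  · have h1 : ∀ p ∈ C, 1 ≤ p.1 := fun p hp => Nat.pos_of_ne_zero fun h => hno0 ⟨p, hp, h⟩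
    rw [image_diagShift, circ_image_diagShift (mem_configs.mp hC).2.2.2 h1]
  · rw [image_diagShift, ← image_fst_image_diagShift]
    exact zpow_neg_circ_eq_sum_throw hn hm hC hq hρ
end
end
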